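/- arXiv:1607.00347 — 4 statements merged into one kernel-verified Lean document; each statement's English description precedes it below -/
import Mathlib

section
/- For finite sets C_0, ..., C_d in R^d each containing the origin in the relative interior of its convex hull, there exists a transversal S (one point from each C_i) whose convex hull contains the origin. -/
/-!
Bárány's argument. Among all transversals take one whose convex hull `K` is closest to the
origin, and let `x` be the point of `K` nearest to `0`. If `x ≠ 0`, then `⟪x, ·⟫ ≥ ‖x‖²` on `K`,
so by Carathéodory `x` is a positive combination of affinely independent points on the
hyperplane `⟪x, ·⟫ = ‖x‖²`; there are at most `d` of them, so some colour `i` is not needed.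
Since `0 ∈ conv C i`, some `y ∈ C i` has `⟪x, y⟫ ≤ 0`, and replacing the colour-`i` point by `y`
puts the segment `[x, y]`, which contains points shorter than `x`, into the convex hull.
-/

open Finset Function Metric Module Set
open scoped RealInnerProductSpace

section Linear

variable {k V ι : Type*} [Field k] [AddCommGroup V] [Module k V] [FiniteDimensional k V]

theorem AffineIndependent.card_le_finrank_of_forall_map_eq [Fintype ι] {p : ι → V}
    (hp : AffineIndependent k p) {f : V →ₗ[k] k} (hf : f ≠ 0) {c : k}
    (hfp : ∀ i, f (p i) = c) : Fintype.card ι ≤ finrank k V := by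
  have hspan : vectorSpan k (range p) ≤ LinearMap.ker f := by
    rw [vectorSpan_def, Submodule.span_le]
    rintro _ ⟨_, ⟨i, rfl⟩, _, ⟨j, rfl⟩, rfl⟩
    simp [hfp]
  have hker : finrank k (LinearMap.ker f) < finrank k V :=
    Submodule.finrank_lt (LinearMap.ker_eq_top.not.2 hf)
  have := Submodule.finrank_mono hspan
  have := hp.card_le_finrank_succ
  omega

variable [LinearOrder k] [IsStrictOrderedRing k]

theorem exists_finset_card_le_finrank_of_mem_convexHull_of_forall_le {A : Set V} {x : V}
    (hx : x ∈ convexHull k A) {f : V →ₗ[k] k} (hf : f ≠ 0) (hmin : ∀ w ∈ A, f x ≤ f w) :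
    ∃ t : Finset V, ↑t ⊆ A ∧ #t ≤ finrank k V ∧ x ∈ convexHull k (t : Set V) := by
  classical
  obtain ⟨ι, _, z, w, hzA, hz, hw0, hw1, rfl⟩ := eq_pos_convex_span_of_mem_convexHull hx
  have hle : ∀ i, f (∑ j, w j • z j) ≤ f (z i) := fun i => hmin _ (hzA ⟨i, rfl⟩)
  -- positive weights force every `z i` onto the supporting level set of `f`
  have hconst : ∀ i, f (z i) = f (∑ j, w j • z j) := by
    by_contra! ⟨i, hi⟩
    have hlt : ∑ j, w j * f (∑ j, w j • z j) < ∑ j, w j * f (z j) :=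
      Finset.sum_lt_sum (fun j _ => mul_le_mul_of_nonneg_left (hle j) (hw0 j).le)
        ⟨i, mem_univ _, mul_lt_mul_of_pos_left ((hle i).lt_of_ne' hi) (hw0 i)⟩
    rw [← Finset.sum_mul, hw1, one_mul] at hlt
    simp [map_sum] at hlt
  refine ⟨univ.image z, by simpa [Set.range_subset_iff] using hzA, ?_, ?_⟩
  · exact card_image_le.trans (hz.card_le_finrank_of_forall_map_eq hf hconst)
  · exact mem_convexHull_of_exists_fintype w z (fun i => (hw0 i).le) hw1 (by simp) rfl

end Linear

section InnerProduct

variable {F : Type*} [NormedAddCommGroup F] [InnerProductSpace ℝ F]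

theorem exists_mem_inner_nonpos_of_zero_mem_convexHull {A : Set F}
    (hA : (0 : F) ∈ convexHull ℝ A) (x : F) : ∃ y ∈ A, ⟪x, y⟫ ≤ 0 := by
  by_contra! h
  have := convexHull_min (t := {z | 0 < ⟪x, z⟫}) h
    (convex_halfSpace_gt (innerₗ F x).isLinear 0) hA
  simp at this

theorem Convex.norm_sq_le_inner_of_isMinOn {K : Set F} (hK : Convex ℝ K) {x : F} (hx : x ∈ K)
    (hmin : IsMinOn norm K x) {w : F} (hw : w ∈ K) : ‖x‖ ^ 2 ≤ ⟪x, w⟫ := by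
  have hmin' : IsMinOn (fun v => ‖0 - v‖) K x := by simpa using hmin
  have h := (norm_eq_iInf_iff_real_inner_le_zero hK hx).1 (hmin'.iInf_eq hx).symm w hw
  rw [zero_sub, inner_neg_left, inner_sub_right, real_inner_self_eq_norm_sq] at h
  linarith

theorem exists_mem_segment_norm_lt {x y : F} (hx : x ≠ 0) (hxy : ⟪x, y⟫ ≤ 0) :
    ∃ z ∈ segment ℝ x y, ‖z‖ < ‖x‖ := by
  by_contra! h
  have := (convex_segment x y).norm_sq_le_inner_of_isMinOn (left_mem_segment ℝ x y)
    h (right_mem_segment ℝ x y)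
  exact hx (norm_eq_zero.1 (by nlinarith [norm_nonneg x]))

variable [FiniteDimensional ℝ F]

theorem exists_update_infDist_convexHull_lt {ι : Type*} [Fintype ι] [DecidableEq ι]
    (hcard : finrank ℝ F < Fintype.card ι) {s : ι → F} (hs : (0 : F) ∉ convexHull ℝ (range s)) :
    ∃ i x, ∀ y, ⟪x, y⟫ ≤ 0 → infDist 0 (convexHull ℝ (range (update s i y))) <
      infDist 0 (convexHull ℝ (range s)) := by
  have hne : Nonempty ι := Fintype.card_pos_iff.1 (by omega)
  obtain ⟨x, hxK, hxd⟩ := ((finite_range s).isCompact_convexHull (𝕜 := ℝ)).exists_infDist_eq_dist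
    ((range_nonempty s).convexHull) 0
  rw [dist_zero_left] at hxd
  have hx0 : x ≠ 0 := by rintro rfl; exact hs hxK
  have hmin : IsMinOn norm (convexHull ℝ (range s)) x := fun w hw => by
    simpa [hxd] using infDist_le_dist_of_mem (x := (0 : F)) hw
  have hface : ∀ w ∈ range s, innerₗ F x x ≤ innerₗ F x w := fun w hw => by
    simpa [real_inner_self_eq_norm_sq] using
      (convex_convexHull ℝ _).norm_sq_le_inner_of_isMinOn hxK hmin (subset_convexHull ℝ _ hw)
  obtain ⟨t, hts, htcard, hxt⟩ := exists_finset_card_le_finrank_of_mem_convexHull_of_forall_le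
    hxK (fun h => hx0 (by simpa using LinearMap.congr_fun h x)) hface
  obtain ⟨i, -, hi⟩ := exists_mem_notMem_of_card_lt_card
    ((card_image_le (s := t) (f := invFun s)).trans_lt (htcard.trans_lt hcard))
  refine ⟨i, x, fun y hxy => ?_⟩
  have hsub : (t : Set F) ⊆ range (update s i y) := fun e he => by
    have hei : invFun s e ≠ i := fun h => hi (h ▸ mem_image_of_mem _ he)
    exact ⟨invFun s e, by rw [update_of_ne hei, invFun_eq (hts he)]⟩
  have hxK' := convexHull_mono hsub hxt
  have hyK' := subset_convexHull ℝ (range (update s i y)) ⟨i, update_self i y s⟩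
  obtain ⟨z, hz, hzx⟩ := exists_mem_segment_norm_lt hx0 hxy
  calc infDist 0 (convexHull ℝ (range (update s i y))) ≤ ‖z‖ := by
        simpa using infDist_le_dist_of_mem (x := (0 : F))
          ((convex_convexHull ℝ _).segment_subset hxK' hyK' hz)
    _ < ‖x‖ := hzx
    _ = infDist 0 (convexHull ℝ (range s)) := hxd.symm

end InnerProduct

/-- **Colorful Carathéodory Theorem.** For finite sets `C 0, …, C d` in `ℝ^d`,
each containing the origin in the relative interior of its convex hull, there is
a transversal (one point from each `C i`) whose convex hull contains the origin. -/
theorem colorful_caratheodory (d : ℕ)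
    (C : Fin (d + 1) → Finset (EuclideanSpace ℝ (Fin d)))
    (hcent : ∀ i, (0 : EuclideanSpace ℝ (Fin d)) ∈
      intrinsicInterior ℝ (convexHull ℝ (C i : Set (EuclideanSpace ℝ (Fin d))))) :
    ∃ s : Fin (d + 1) → EuclideanSpace ℝ (Fin d),
      (∀ i, s i ∈ C i) ∧
      (0 : EuclideanSpace ℝ (Fin d)) ∈ convexHull ℝ (Set.range s) := by
  have h0 i := intrinsicInterior_subset (hcent i)
  have hC : (Fintype.piFinset C).Nonempty :=
    Fintype.piFinset_nonempty.2 fun i => coe_nonempty.1 (convexHull_nonempty_iff.1 ⟨0, h0 i⟩)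
  obtain ⟨s, hsC, hmin⟩ :=
    (Fintype.piFinset C).exists_min_image (fun s => infDist 0 (convexHull ℝ (range s))) hC
  rw [Fintype.mem_piFinset] at hsC
  refine ⟨s, hsC, ?_⟩
  by_contra hs
  obtain ⟨i, x, hlt⟩ := exists_update_infDist_convexHull_lt (by simp) hs
  obtain ⟨y, hyC, hxy⟩ := exists_mem_inner_nonpos_of_zero_mem_convexHull (h0 i) x
  refine (hlt y hxy).not_ge (hmin _ (Fintype.mem_piFinset.2 fun j => ?_))
  rcases eq_or_ne j i with rfl | hj
  · simpa using hyC
  · simpa [hj] using hsC j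
end

section
/- Let v_0, ..., v_d ∈ R^d be vertices of a simplex containing the origin in its interior, and for n_0, ..., n_d ≥ 2 define C_i = {v_i, -v_i, -2v_i, ..., -(n_i-1)v_i}. Then C = {C_0, ..., C_d} is a centered colorful configuration whose number of hitting simplices is exactly 1 + (n_0-1)(n_1-1)···(n_d-1). -/
/-!
Write `pts i j = c j • v i`, where `c 0 = 1` and `c j = -j` for `j ≥ 1`. Every colour class lies
on the line `ℝ v i` and contains `± v i`, hence is centered. The barycentric coordinates `λ` of
the origin are positive, and since the `v i` form an affine basis, `∑ λ i • v i = 0` is up to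
scaling their only linear relation. So if `0 = ∑ μ i • c i • v i` is a convex combination, then
`μ i * c i = S * λ i` for a fixed `S ≠ 0`, and all the `c i` have the sign of `S`. Conversely,
scalars of one sign give the convex weights `λ i / c i`, up to normalisation and sign; once `0`
lies in the affine span of the transversal, so does every `v i = (c i)⁻¹ • c i • v i`. The
hitting simplices are therefore `v` itself and the `∏ (n i - 1)` transversals that avoid `v`
entirely.
-/

open Finset

lemma mem_convexHull_range_iff_exists_sum {ι E : Type*} [Fintype ι] [AddCommGroup E] [Module ℝ E]
    {p : ι → E} {x : E} :
    x ∈ convexHull ℝ (Set.range p) ↔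
      ∃ μ : ι → ℝ, (∀ i, 0 ≤ μ i) ∧ ∑ i, μ i = 1 ∧ ∑ i, μ i • p i = x := by
  classical
  rw [convexHull_range_eq_exists_affineCombination]
  constructor
  · rintro ⟨s, μ, hμ₀, hμ₁, rfl⟩
    refine ⟨fun i => if i ∈ s then μ i else 0, fun i => ?_, ?_, ?_⟩
    · by_cases hi : i ∈ s <;> simp [hi, hμ₀]
    · rw [sum_ite_mem, univ_inter, hμ₁]
    · simp only [s.affineCombination_eq_linear_combination _ _ hμ₁, ite_smul, zero_smul,
        sum_ite_mem, univ_inter]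
  · rintro ⟨μ, hμ₀, hμ₁, rfl⟩
    exact ⟨univ, μ, fun i _ => hμ₀ i, hμ₁, univ.affineCombination_eq_linear_combination _ _ hμ₁⟩

lemma AffineSubspace.smul_mem_of_zero_mem {E : Type*} [AddCommGroup E] [Module ℝ E]
    {A : AffineSubspace ℝ E} (h0 : (0 : E) ∈ A) {x : E} (hx : x ∈ A) (t : ℝ) : t • x ∈ A := by
  simpa using A.smul_vsub_vadd_mem t hx h0 h0

lemma zero_mem_intrinsicInterior_of_subset_span_singleton {E : Type*} [NormedAddCommGroup E]
    [NormedSpace ℝ E] {s : Set E} {v : E} (hs : Convex ℝ s) (hsv : s ⊆ Submodule.span ℝ {v})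
    (hv : v ∈ s) (hnv : -v ∈ s) : (0 : E) ∈ intrinsicInterior ℝ s := by
  rcases eq_or_ne v 0 with rfl | hv0
  · have : s = {0} := subset_antisymm (by simpa using hsv) (by simpa using hv)
    simp [this]
  set u := ‖v‖⁻¹ • v
  have hu : ‖u‖ = 1 := norm_smul_inv_norm hv0
  let φ := (LinearIsometry.toSpanSingleton ℝ E hu).toAffineIsometry
  have hφ : ∀ r, φ r = r • u := LinearIsometry.toSpanSingleton_apply hu
  have hvu : ‖v‖ • u = v := by simp [u, smul_smul, hv0]
  have hs_image : φ '' (φ ⁻¹' s) = s := by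
    refine Set.image_preimage_eq_of_subset fun x hx => ?_
    obtain ⟨a, rfl⟩ := Submodule.mem_span_singleton.mp (hsv hx)
    exact ⟨a * ‖v‖, by rw [hφ, mul_smul, hvu]⟩
  have hIcc : Set.Icc (-‖v‖) ‖v‖ ⊆ φ ⁻¹' s := by
    rw [← segment_eq_Icc (by simp)]
    refine (hs.affine_preimage φ.toAffineMap).segment_subset ?_ ?_
    · simpa [hφ, neg_smul, hvu] using hnv
    · simpa [hφ, hvu] using hv
  have h0 : (0 : ℝ) ∈ interior (φ ⁻¹' s) :=
    interior_mono hIcc (mem_interior_iff_mem_nhds.2 (Icc_mem_nhds (by simpa) (by simpa)))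
  rw [← hs_image, AffineIsometry.intrinsicInterior_image]
  exact ⟨0, interior_subset_intrinsicInterior h0, by simp [hφ]⟩

lemma zero_mem_intrinsicInterior_convexHull_range_smul {κ E : Type*} [NormedAddCommGroup E]
    [NormedSpace ℝ E] {f : κ → ℝ} (v : E) (h1 : 1 ∈ Set.range f) (hm1 : -1 ∈ Set.range f) :
    (0 : E) ∈ intrinsicInterior ℝ (convexHull ℝ (Set.range fun j => f j • v)) := by
  refine zero_mem_intrinsicInterior_of_subset_span_singleton (v := v)
    (convex_convexHull ℝ _) ?_ ?_ ?_
  · refine convexHull_min ?_ (Submodule.span ℝ {v}).convex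
    rintro _ ⟨j, rfl⟩
    exact Submodule.smul_mem _ _ (Submodule.mem_span_singleton_self v)
  · obtain ⟨j, hj⟩ := h1
    exact subset_convexHull ℝ _ ⟨j, by simp [hj]⟩
  · obtain ⟨j, hj⟩ := hm1
    exact subset_convexHull ℝ _ ⟨j, by simp [hj]⟩

lemma zero_mem_convexHull_of_sum_smul_eq_zero {ι E : Type*} [Fintype ι] [Nonempty ι]
    [AddCommGroup E] [Module ℝ E] {p : ι → E} {w : ι → ℝ} (hw : ∀ i, 0 < w i)
    (h : ∑ i, w i • p i = 0) : (0 : E) ∈ convexHull ℝ (Set.range p) := by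
  simpa [centerMass, h] using univ.centerMass_mem_convexHull (fun i _ => (hw i).le)
    (sum_pos (fun i _ => hw i) univ_nonempty) (fun i _ => Set.mem_range_self (f := p) i)

namespace AffineBasis

variable {ι E : Type*} [AddCommGroup E] [Module ℝ E] {b : AffineBasis ι ℝ E}

lemma affineSpan_smul_eq_top {c : ι → ℝ} (hc : ∀ i, c i ≠ 0)
    (h0 : (0 : E) ∈ affineSpan ℝ (Set.range fun i => c i • b i)) :
    affineSpan ℝ (Set.range fun i => c i • b i) = ⊤ := by
  rw [eq_top_iff, ← b.tot, affineSpan_le]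
  rintro _ ⟨i, rfl⟩
  simpa [smul_smul, hc i] using AffineSubspace.smul_mem_of_zero_mem h0
    (subset_affineSpan ℝ _ (Set.mem_range_self i)) (c i)⁻¹

variable [Fintype ι]

lemma eq_sum_mul_coord_zero_of_sum_smul_eq_zero (b : AffineBasis ι ℝ E) {t : ι → ℝ}
    (ht : ∑ i, t i • b i = 0) (i : ι) : t i = (∑ j, t j) * b.coord i 0 := by
  refine b.ind.eq_of_sum_eq_sum (w₂ := fun j => (∑ k, t k) * b.coord j 0) ?_ ?_ i (mem_univ i)
  · rw [← mul_sum, b.sum_coord_apply_eq_one, mul_one]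
  · simp_rw [mul_smul, ← smul_sum, b.linear_combination_coord_eq_self, smul_zero, ht]

lemma zero_mem_convexHull_smul_iff (hb : ∀ i, 0 < b.coord i 0) {c : ι → ℝ} (hc : ∀ i, c i ≠ 0) :
    (0 : E) ∈ convexHull ℝ (Set.range fun i => c i • b i) ↔ (∀ i, 0 < c i) ∨ ∀ i, c i < 0 := by
  constructor
  · rw [mem_convexHull_range_iff_exists_sum]
    rintro ⟨μ, hμ₀, hμ₁, hμ⟩
    simp_rw [smul_smul] at hμ
    have hdep := b.eq_sum_mul_coord_zero_of_sum_smul_eq_zero hμ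
    set S := ∑ j, μ j * c j
    rcases lt_trichotomy S 0 with hS | hS | hS
    · exact .inr fun i => neg_of_mul_neg_right (hdep i ▸ mul_neg_of_neg_of_pos hS (hb i)) (hμ₀ i)
    · have : ∀ i, μ i = 0 := fun i => by simpa [hS, hc i] using hdep i
      simp [this] at hμ₁
    · exact .inl fun i => pos_of_mul_pos_right (hdep i ▸ mul_pos hS (hb i)) (hμ₀ i)
  · have hsum : ∑ i, (b.coord i 0 / c i) • c i • b i = 0 := by
      simp_rw [smul_smul, div_mul_cancel₀ _ (hc _)]
      exact b.linear_combination_coord_eq_self 0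
    have := b.nonempty
    rintro (hpos | hneg)
    · exact zero_mem_convexHull_of_sum_smul_eq_zero (fun i => div_pos (hb i) (hpos i)) hsum
    · refine zero_mem_convexHull_of_sum_smul_eq_zero
        (fun i => neg_pos.2 (div_neg_of_pos_of_neg (hb i) (hneg i))) ?_
      simp_rw [neg_smul, sum_neg_distrib, hsum, neg_zero]

lemma affineSpan_eq_top_and_zero_mem_convexHull_smul_iff (hb : ∀ i, 0 < b.coord i 0)
    {c : ι → ℝ} (hc : ∀ i, c i ≠ 0) :
    (affineSpan ℝ (Set.range fun i => c i • b i) = ⊤ ∧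
        (0 : E) ∈ convexHull ℝ (Set.range fun i => c i • b i)) ↔
      (∀ i, 0 < c i) ∨ ∀ i, c i < 0 := by
  rw [← zero_mem_convexHull_smul_iff hb hc]
  exact ⟨And.right, fun h => ⟨affineSpan_smul_eq_top hc (convexHull_subset_affineSpan _ h), h⟩⟩

end AffineBasis

lemma card_forall_val_eq_zero_or_forall_val_ne_zero {ι : Type*} [Fintype ι] [Nonempty ι]
    (n : ι → ℕ) (hn : ∀ i, 0 < n i) :
    Nat.card {α : (i : ι) → Fin (n i) // (∀ i, (α i : ℕ) = 0) ∨ ∀ i, (α i : ℕ) ≠ 0} =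
      1 + ∏ i, (n i - 1) := by
  classical
  have hdisj : Disjoint (fun α : (i : ι) → Fin (n i) => ∀ i, (α i : ℕ) = 0)
      (fun α => ∀ i, (α i : ℕ) ≠ 0) := by
    refine Pi.disjoint_iff.2 fun α => Prop.disjoint_iff.2 fun ⟨h0, hne⟩ => ?_
    obtain ⟨i⟩ := ‹Nonempty ι›
    exact hne i (h0 i)
  have hzero : ∀ i, Fintype.card {j : Fin (n i) // (j : ℕ) = 0} = 1 := fun i =>
    Fintype.card_eq_one_iff.2 ⟨⟨⟨0, hn i⟩, rfl⟩, fun ⟨_, hj⟩ => Subtype.ext (Fin.ext hj)⟩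
  rw [Nat.card_eq_fintype_card, Fintype.card_subtype_or_disjoint _ _ hdisj,
    Fintype.card_congr (Equiv.subtypePiEquivPi (p := fun i (j : Fin (n i)) => (j : ℕ) = 0)),
    Fintype.card_congr (Equiv.subtypePiEquivPi (p := fun i (j : Fin (n i)) => (j : ℕ) ≠ 0)),
    Fintype.card_pi, Fintype.card_pi]
  simp_rw [Fintype.card_subtype_compl, hzero, Fintype.card_fin, prod_const_one]

def extremalScalar (j : ℕ) : ℝ := if j = 0 then 1 else -j

lemma extremalScalar_pos_iff {j : ℕ} : 0 < extremalScalar j ↔ j = 0 := by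
  rcases eq_or_ne j 0 with rfl | hj <;> simp [extremalScalar, *]

lemma extremalScalar_neg_iff {j : ℕ} : extremalScalar j < 0 ↔ j ≠ 0 := by
  rcases eq_or_ne j 0 with rfl | hj <;> simp [extremalScalar, *, Nat.pos_of_ne_zero]

lemma extremalScalar_ne_zero (j : ℕ) : extremalScalar j ≠ 0 := by
  rcases eq_or_ne j 0 with hj | hj
  · exact (extremalScalar_pos_iff.2 hj).ne'
  · exact (extremalScalar_neg_iff.2 hj).ne

/-- The extremal example: with `v 0, …, v d` the vertices of a simplex containing the
origin in its interior and `C i = {v i, -v i, -2 v i, …, -(n i - 1) v i}`, the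
configuration is centered and has exactly `1 + ∏ (n i - 1)` hitting simplices. -/
theorem extremal_example (d : ℕ) (v : Fin (d + 1) → EuclideanSpace ℝ (Fin d))
    (hv : AffineIndependent ℝ v)
    (h0 : (0 : EuclideanSpace ℝ (Fin d)) ∈ interior (convexHull ℝ (Set.range v)))
    (n : Fin (d + 1) → ℕ) (hn : ∀ i, 2 ≤ n i)
    (pts : (i : Fin (d + 1)) → Fin (n i) → EuclideanSpace ℝ (Fin d))
    (hpts : ∀ i (j : Fin (n i)),
      pts i j = if (j : ℕ) = 0 then v i else (-(j : ℕ) : ℝ) • v i) :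
    (∀ i, (0 : EuclideanSpace ℝ (Fin d)) ∈
        intrinsicInterior ℝ (convexHull ℝ (Set.range (pts i)))) ∧
    Nat.card {α : (i : Fin (d + 1)) → Fin (n i) //
        affineSpan ℝ (Set.range fun i => pts i (α i)) = ⊤ ∧
        (0 : EuclideanSpace ℝ (Fin d)) ∈ convexHull ℝ (Set.range fun i => pts i (α i))}
      = 1 + ∏ i, (n i - 1) := by
  have hpts' : ∀ i, pts i = fun j : Fin (n i) => extremalScalar j • v i :=
    fun i => funext fun j => by rw [hpts, extremalScalar, ite_smul, one_smul]
  let b : AffineBasis (Fin (d + 1)) ℝ (EuclideanSpace ℝ (Fin d)) :=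
    ⟨v, hv, hv.affineSpan_eq_top_iff_card_eq_finrank_add_one.2 (by simp)⟩
  have hb : ∀ i, 0 < b.coord i 0 := by
    have : (0 : EuclideanSpace ℝ (Fin d)) ∈ interior (convexHull ℝ (Set.range b)) := h0
    rwa [b.interior_convexHull] at this
  refine ⟨fun i => hpts' i ▸ zero_mem_intrinsicInterior_convexHull_range_smul (v i)
    ⟨⟨0, by grind⟩, by simp [extremalScalar]⟩ ⟨⟨1, hn i⟩, by simp [extremalScalar]⟩, ?_⟩
  have hchar : ∀ α : (i : Fin (d + 1)) → Fin (n i),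
      (affineSpan ℝ (Set.range fun i => pts i (α i)) = ⊤ ∧
        (0 : EuclideanSpace ℝ (Fin d)) ∈ convexHull ℝ (Set.range fun i => pts i (α i))) ↔
      (∀ i, (α i : ℕ) = 0) ∨ ∀ i, (α i : ℕ) ≠ 0 := fun α => by
    simp_rw [hpts']
    exact (b.affineSpan_eq_top_and_zero_mem_convexHull_smul_iff hb
      fun i => extremalScalar_ne_zero (α i)).trans
      (by simp only [extremalScalar_pos_iff, extremalScalar_neg_iff])
  rw [Nat.card_congr (Equiv.subtypeEquivRight hchar)]
  exact card_forall_val_eq_zero_or_forall_val_ne_zero n fun i => by grind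
end

section
/- The set X of colorful configurations f : Δ → R^d such that 0 ∈ aff f(ρ_1) ∩ aff f(ρ_2) for two distinct colorful (d-1)-simplices ρ_1, ρ_2 is contained in a finite union of sets of dimension at most d(n_0 + ... + n_d) − 2 in the space R^{d·|Δ|} of all configurations. -/
open Finset

/-- The mod-2 simplicial boundary operator (with augmentation) on the space of all
`ZMod 2`-valued functions on finite vertex subsets. -/
noncomputable def bdry {V : Type*} [Fintype V] [DecidableEq V] :
    (Finset V → ZMod 2) →ₗ[ZMod 2] (Finset V → ZMod 2) where
  toFun c := fun τ => ∑ v ∈ Finset.univ \ τ, c (insert v τ)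
  map_add' x y := by funext τ; simp [Finset.sum_add_distrib]
  map_smul' m x := by funext τ; simp [Finset.mul_sum, mul_sub]

/-- `k`-chains of the complex `K`: functions supported on faces of `K` with `k + 1`
vertices. -/
def chainsOf {V : Type*} [Fintype V] [DecidableEq V] (K : Finset V → Prop) (k : ℕ) :
    Submodule (ZMod 2) (Finset V → ZMod 2) where
  carrier := {c | ∀ σ, c σ ≠ 0 → K σ ∧ σ.card = k + 1}
  add_mem' := by
    intro a b ha hb σ h
    by_cases h1 : a σ = 0
    · exact hb σ (by simpa [h1] using h)
    · exact ha σ h1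
  zero_mem' := by intro σ h; simp at h
  smul_mem' := by
    intro m x hx σ h
    exact hx σ (by intro h0; exact h (by simp [h0]))

/-- Reduced `k`-cycles of `K` (the boundary operator includes the augmentation,
so this computes *reduced* homology). -/
noncomputable def cyclesOf {V : Type*} [Fintype V] [DecidableEq V]
    (K : Finset V → Prop) (k : ℕ) : Submodule (ZMod 2) (Finset V → ZMod 2) :=
  chainsOf K k ⊓ LinearMap.ker bdry

/-- `k`-boundaries of `K`. -/
noncomputable def boundariesOf {V : Type*} [Fintype V] [DecidableEq V]
    (K : Finset V → Prop) (k : ℕ) : Submodule (ZMod 2) (Finset V → ZMod 2) :=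
  Submodule.map bdry (chainsOf K (k + 1))

/-- The `k`-th reduced Betti number of `K` over `ZMod 2`: the dimension of reduced
cycles modulo boundaries. -/
noncomputable def bettiOf {V : Type*} [Fintype V] [DecidableEq V]
    (K : Finset V → Prop) (k : ℕ) : ℕ :=
  Module.finrank (ZMod 2)
    (↥(cyclesOf K k) ⧸ Submodule.comap (cyclesOf K k).subtype (boundariesOf K k))

/-- Faces of the colorful complex `Rain(n)`: at most one vertex of each color. -/
def IsColorful {d : ℕ} {n : Fin (d + 1) → ℕ}
    (σ : Finset ((i : Fin (d + 1)) × Fin (n i))) : Prop :=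
  ∀ v ∈ σ, ∀ w ∈ σ, v.1 = w.1 → v = w

/-!
Take an affine dependence witnessing `0 ∈ aff f(ρ)` and let `S ⊆ ρ` be its support: every
`f j` with `j ∈ S` is then a linear combination of the `f i`, `i ∈ S \ {j}`. For two distinct
`d`-sets `ρ₁, ρ₂` with supports `S₁, S₂`, either `S₁ ⊆ ρ₁ ∩ ρ₂`, which has fewer than `d`
points, so that a single `f j` is a combination of at most `d - 2` other points; or some
`j₁ ∈ S₁ \ ρ₂` and some `j₂ ∈ S₂` give two distinct points, each a combination of at most
`d - 1` others, where `f j₂` does not involve `f j₁`. In both cases such configurations are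
the image of a smooth map whose parameters are the remaining points and the coefficients, a
space of dimension at most `d·|Δ| - 2`.
-/

open Module Submodule Function

section LinearAlgebra

variable {K M V : Type*} [Field K] [AddCommGroup M] [Module K M] [DecidableEq V]

theorem mem_span_image_erase_of_sum_smul_eq_zero {S : Finset V} {w : V → K} {f : V → M}
    {j : V} (hj : j ∈ S) (hwj : w j ≠ 0) (h : ∑ i ∈ S, w i • f i = 0) :
    f j ∈ span K (f '' ↑(S.erase j)) := by
  have hrest : ∑ i ∈ S.erase j, w i • f i = -(w j • f j) :=
    eq_neg_of_add_eq_zero_right ((Finset.add_sum_erase S (fun i => w i • f i) hj).trans h)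
  have hfj : f j = -(w j)⁻¹ • ∑ i ∈ S.erase j, w i • f i := by
    rw [hrest, smul_neg, neg_smul, neg_neg, smul_smul, inv_mul_cancel₀ hwj, one_smul]
  rw [hfj]
  exact smul_mem _ _ (sum_mem fun i hi => smul_mem _ _ (subset_span ⟨i, hi, rfl⟩))

theorem exists_subset_forall_mem_span_image_erase {ρ : Finset V} {f : V → M}
    (h : (0 : M) ∈ affineSpan K (f '' ↑ρ)) :
    ∃ S ⊆ ρ, S.Nonempty ∧ ∀ j ∈ S, f j ∈ span K (f '' ↑(S.erase j)) := by
  classical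
  obtain ⟨s, w, hsρ, hw, h0⟩ := eq_affineCombination_of_mem_affineSpan_image h
  rw [Finset.affineCombination_eq_linear_combination _ _ _ hw] at h0
  refine ⟨s.filter (w · ≠ 0), fun v hv => hsρ (Finset.mem_filter.1 hv).1, ?_, fun j hj => ?_⟩
  · rw [← Finset.sum_filter_ne_zero] at hw
    exact Finset.nonempty_of_sum_ne_zero (hw ▸ one_ne_zero)
  · refine mem_span_image_erase_of_sum_smul_eq_zero hj (Finset.mem_filter.1 hj).2 ?_
    rw [Finset.sum_filter_of_ne fun v _ hv => left_ne_zero_of_smul hv, h0]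

theorem Finset.card_inter_lt_of_ne {ρ₁ ρ₂ : Finset V} {e : ℕ} (h₁ : #ρ₁ ≤ e) (h₂ : #ρ₂ ≤ e)
    (hne : ρ₁ ≠ ρ₂) : #(ρ₁ ∩ ρ₂) < e := by
  by_contra! h
  have hρ₁ := Finset.eq_of_subset_of_card_le Finset.inter_subset_left (h₁.trans h)
  have hρ₂ := Finset.eq_of_subset_of_card_le Finset.inter_subset_right (h₂.trans h)
  exact hne (hρ₁.symm.trans hρ₂)

theorem mem_span_cases_of_mem_affineSpan_of_ne {f : V → M} {ρ₁ ρ₂ : Finset V} {e : ℕ}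
    (h₁ : #ρ₁ ≤ e) (h₂ : #ρ₂ ≤ e) (hne : ρ₁ ≠ ρ₂)
    (hf₁ : (0 : M) ∈ affineSpan K (f '' ↑ρ₁)) (hf₂ : (0 : M) ∈ affineSpan K (f '' ↑ρ₂)) :
    (∃ j₁ S₁ j₂ S₂, j₁ ≠ j₂ ∧ j₁ ∉ S₁ ∧ j₂ ∉ S₂ ∧ j₁ ∉ S₂ ∧ #S₁ < e ∧ #S₂ < e ∧
        f j₁ ∈ span K (f '' ↑S₁) ∧ f j₂ ∈ span K (f '' ↑S₂)) ∨
      ∃ j S, j ∉ S ∧ #S + 1 < e ∧ f j ∈ span K (f '' ↑S) := by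
  obtain ⟨S₁, hS₁ρ, ⟨j, hj⟩, hS₁⟩ := exists_subset_forall_mem_span_image_erase hf₁
  obtain ⟨S₂, hS₂ρ, ⟨j₂, hj₂⟩, hS₂⟩ := exists_subset_forall_mem_span_image_erase hf₂
  by_cases hsub : S₁ ⊆ ρ₂
  · have hS₁e : #S₁ < e := (Finset.card_le_card (Finset.subset_inter hS₁ρ hsub)).trans_lt
      (Finset.card_inter_lt_of_ne h₁ h₂ hne)
    refine Or.inr ⟨j, S₁.erase j, Finset.notMem_erase j S₁, ?_, hS₁ j hj⟩
    have := Finset.card_erase_add_one hj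
    omega
  · obtain ⟨j₁, hj₁S₁, hj₁ρ₂⟩ := Finset.not_subset.1 hsub
    refine Or.inl ⟨j₁, S₁.erase j₁, j₂, S₂.erase j₂, fun h => hj₁ρ₂ (h ▸ hS₂ρ hj₂),
      Finset.notMem_erase j₁ S₁, Finset.notMem_erase j₂ S₂,
      fun h => hj₁ρ₂ (hS₂ρ (Finset.mem_of_mem_erase h)), ?_, ?_, hS₁ j₁ hj₁S₁, hS₂ j₂ hj₂⟩
    · exact (Finset.card_erase_lt_of_mem hj₁S₁).trans_le ((Finset.card_le_card hS₁ρ).trans h₁)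
    · exact (Finset.card_erase_lt_of_mem hj₂).trans_le ((Finset.card_le_card hS₂ρ).trans h₂)

end LinearAlgebra

section Parametrization

variable {V E : Type*} [DecidableEq V]

def extendByZero [Zero E] (T : Finset V) (g : T → E) : V → E :=
  fun v => if h : v ∈ T then g ⟨v, h⟩ else 0

theorem extendByZero_restrict [Zero E] {T : Finset V} (f : V → E) {v : V} (hv : v ∈ T) :
    extendByZero T (fun t => f t) v = f v :=
  dif_pos hv

def solveAt {R : Type*} [Semiring R] [AddCommMonoid E] [Module R E] (j : V) (S : Finset V)
    (c : S → R) (f : V → E) : V → E :=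
  update f j (∑ i, c i • f i)

theorem solveAt_eq_update {R : Type*} [Semiring R] [AddCommMonoid E] [Module R E] {j : V}
    {S : Finset V} {c : S → R} {f g : V → E} (hS : ∀ i ∈ S, g i = f i)
    (hc : ∑ i, c i • f i = f j) :
    solveAt j S c g = update g j (f j) := by
  rw [solveAt, ← hc]
  exact congrArg _ (Finset.sum_congr rfl fun i _ => by rw [hS i i.2])

variable [Fintype V]

theorem setOf_mem_span_image_subset_range {R : Type*} [Semiring R] [AddCommGroup E]
    [Module R E] {j : V} {S : Finset V} (hj : j ∉ S) :
    {f : V → E | f j ∈ span R (f '' ↑S)} ⊆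
      Set.range fun p : (({j}ᶜ : Finset V) → E) × (S → R) =>
        solveAt j S p.2 (extendByZero {j}ᶜ p.1) := by
  intro f hf
  obtain ⟨c, hc⟩ := (mem_span_image_finset_iff_exists_fun R).1 hf
  have hext : ∀ v ≠ j, extendByZero {j}ᶜ (fun t => f t) v = f v := fun v hv =>
    extendByZero_restrict f (by simpa using hv)
  refine ⟨((fun t => f t), c), ?_⟩
  beta_reduce
  rw [solveAt_eq_update (fun i hi => hext i (ne_of_mem_of_not_mem hi hj)) hc, update_eq_iff]
  exact ⟨rfl, hext⟩

theorem setOf_mem_span_image_and_mem_span_image_subset_range {R : Type*} [Semiring R]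
    [AddCommGroup E] [Module R E] {j₁ j₂ : V} {S₁ S₂ : Finset V} (hj₁ : j₁ ∉ S₁)
    (hj₂ : j₂ ∉ S₂) (hj₁S₂ : j₁ ∉ S₂) :
    {f : V → E | f j₁ ∈ span R (f '' ↑S₁) ∧ f j₂ ∈ span R (f '' ↑S₂)} ⊆
      Set.range fun p : (({j₁, j₂}ᶜ : Finset V) → E) × (S₁ → R) × (S₂ → R) =>
        solveAt j₁ S₁ p.2.1 (solveAt j₂ S₂ p.2.2 (extendByZero {j₁, j₂}ᶜ p.1)) := by
  rintro f ⟨hf₁, hf₂⟩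
  obtain ⟨c₁, hc₁⟩ := (mem_span_image_finset_iff_exists_fun R).1 hf₁
  obtain ⟨c₂, hc₂⟩ := (mem_span_image_finset_iff_exists_fun R).1 hf₂
  have hext : ∀ v ≠ j₁, v ≠ j₂ → extendByZero {j₁, j₂}ᶜ (fun t => f t) v = f v :=
    fun v hv₁ hv₂ => extendByZero_restrict f (by simp [hv₁, hv₂])
  have hinner : ∀ v ≠ j₁,
      solveAt j₂ S₂ c₂ (extendByZero {j₁, j₂}ᶜ (fun t => f t)) v = f v := by
    intro v hv
    rw [solveAt_eq_update (fun i hi => hext i (ne_of_mem_of_not_mem hi hj₁S₂)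
      (ne_of_mem_of_not_mem hi hj₂)) hc₂, update_apply]
    split_ifs with hvj
    · rw [hvj]
    · exact hext v hv hvj
  refine ⟨((fun t => f t), c₁, c₂), ?_⟩
  beta_reduce
  rw [solveAt_eq_update (fun i hi => hinner i (ne_of_mem_of_not_mem hi hj₁)) hc₁,
    update_eq_iff]
  exact ⟨rfl, hinner⟩

variable [NormedAddCommGroup E] [NormedSpace ℝ E]

theorem contDiff_extendByZero (T : Finset V) : ContDiff ℝ 1 (extendByZero (E := E) T) := by
  refine contDiff_pi.2 fun v => ?_
  by_cases hv : v ∈ T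
  · simpa only [extendByZero, dif_pos hv] using contDiff_apply ℝ E (⟨v, hv⟩ : T)
  · simpa only [extendByZero, dif_neg hv] using contDiff_const

theorem contDiff_solveAt (j : V) (S : Finset V) :
    ContDiff ℝ 1 (fun p : (S → ℝ) × (V → E) => solveAt j S p.1 p.2) := by
  refine contDiff_pi.2 fun v => ?_
  by_cases hv : v = j
  · subst hv
    simp only [solveAt, update_self]
    fun_prop
  · simp only [solveAt, update_of_ne hv]
    fun_prop

variable [FiniteDimensional ℝ E]

theorem dimH_setOf_mem_span_image_le {j : V} {S : Finset V} (hj : j ∉ S) :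
    dimH {f : V → E | f j ∈ span ℝ (f '' ↑S)} ≤
      ((Fintype.card V - 1) * finrank ℝ E + #S : ℕ) :=
  calc dimH {f : V → E | f j ∈ span ℝ (f '' ↑S)}
      ≤ dimH (Set.range fun p : (({j}ᶜ : Finset V) → E) × (S → ℝ) =>
          solveAt j S p.2 (extendByZero {j}ᶜ p.1)) :=
        dimH_mono (setOf_mem_span_image_subset_range hj)
    _ ≤ finrank ℝ ((({j}ᶜ : Finset V) → E) × (S → ℝ)) :=
        ContDiff.dimH_range_le <| (contDiff_solveAt j S).comp
          (contDiff_snd.prodMk ((contDiff_extendByZero _).comp contDiff_fst))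
    _ = ((Fintype.card V - 1) * finrank ℝ E + #S : ℕ) := by
      simp [finrank_prod, finrank_pi_fintype, Finset.card_compl]

theorem dimH_setOf_mem_span_image_and_mem_span_image_le {j₁ j₂ : V} {S₁ S₂ : Finset V}
    (hj : j₁ ≠ j₂) (hj₁ : j₁ ∉ S₁) (hj₂ : j₂ ∉ S₂) (hj₁S₂ : j₁ ∉ S₂) :
    dimH {f : V → E | f j₁ ∈ span ℝ (f '' ↑S₁) ∧ f j₂ ∈ span ℝ (f '' ↑S₂)} ≤
      ((Fintype.card V - 2) * finrank ℝ E + #S₁ + #S₂ : ℕ) :=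
  calc dimH {f : V → E | f j₁ ∈ span ℝ (f '' ↑S₁) ∧ f j₂ ∈ span ℝ (f '' ↑S₂)}
      ≤ dimH (Set.range fun p : (({j₁, j₂}ᶜ : Finset V) → E) × (S₁ → ℝ) × (S₂ → ℝ) =>
          solveAt j₁ S₁ p.2.1 (solveAt j₂ S₂ p.2.2 (extendByZero {j₁, j₂}ᶜ p.1))) :=
        dimH_mono (setOf_mem_span_image_and_mem_span_image_subset_range hj₁ hj₂ hj₁S₂)
    _ ≤ finrank ℝ ((({j₁, j₂}ᶜ : Finset V) → E) × (S₁ → ℝ) × (S₂ → ℝ)) :=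
        ContDiff.dimH_range_le <| (contDiff_solveAt j₁ S₁).comp
          ((contDiff_fst.comp contDiff_snd).prodMk ((contDiff_solveAt j₂ S₂).comp
            ((contDiff_snd.comp contDiff_snd).prodMk
              ((contDiff_extendByZero _).comp contDiff_fst))))
    _ = ((Fintype.card V - 2) * finrank ℝ E + #S₁ + #S₂ : ℕ) := by
      rw [finrank_prod, finrank_prod, finrank_pi_fintype, finrank_pi, finrank_pi,
        Finset.sum_const, Finset.card_univ, Fintype.card_coe, Fintype.card_coe, Fintype.card_coe,
        Finset.card_compl, Finset.card_pair hj, smul_eq_mul, add_assoc]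

end Parametrization

theorem exists_finite_cover_dimH_le_of_mem_affineSpan_of_ne {V E : Type*} [Fintype V]
    [DecidableEq V] [NormedAddCommGroup E] [NormedSpace ℝ E] [FiniteDimensional ℝ E] :
    ∃ 𝒜 : Set (Set (V → E)), 𝒜.Finite ∧
      {f : V → E | ∃ ρ₁ ρ₂ : Finset V, #ρ₁ ≤ finrank ℝ E ∧ #ρ₂ ≤ finrank ℝ E ∧ ρ₁ ≠ ρ₂ ∧
          (0 : E) ∈ affineSpan ℝ (f '' ↑ρ₁) ∧ (0 : E) ∈ affineSpan ℝ (f '' ↑ρ₂)} ⊆ ⋃₀ 𝒜 ∧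
      ∀ A ∈ 𝒜, dimH A ≤ (Fintype.card V * finrank ℝ E - 2 : ℕ) := by
  refine ⟨{A | (∃ j₁ S₁ j₂ S₂, j₁ ≠ j₂ ∧ j₁ ∉ S₁ ∧ j₂ ∉ S₂ ∧ j₁ ∉ S₂ ∧
        #S₁ < finrank ℝ E ∧ #S₂ < finrank ℝ E ∧
        A = {f : V → E | f j₁ ∈ span ℝ (f '' ↑S₁) ∧ f j₂ ∈ span ℝ (f '' ↑S₂)}) ∨
      ∃ j S, j ∉ S ∧ #S + 1 < finrank ℝ E ∧ A = {f : V → E | f j ∈ span ℝ (f '' ↑S)}}, ?_, ?_, ?_⟩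
  · refine ((Set.finite_range fun p : (V × Finset V) × V × Finset V =>
      {f : V → E | f p.1.1 ∈ span ℝ (f '' ↑p.1.2) ∧ f p.2.1 ∈ span ℝ (f '' ↑p.2.2)}).union
      (Set.finite_range fun p : V × Finset V => {f : V → E | f p.1 ∈ span ℝ (f '' ↑p.2)})).subset ?_
    rintro A (⟨j₁, S₁, j₂, S₂, -, -, -, -, -, -, rfl⟩ | ⟨j, S, -, -, rfl⟩)
    exacts [Or.inl ⟨((j₁, S₁), (j₂, S₂)), rfl⟩, Or.inr ⟨(j, S), rfl⟩]
  · rintro f ⟨ρ₁, ρ₂, h₁, h₂, hne, hf₁, hf₂⟩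
    rcases mem_span_cases_of_mem_affineSpan_of_ne h₁ h₂ hne hf₁ hf₂ with
      ⟨j₁, S₁, j₂, S₂, hj, hj₁, hj₂, hj₁S₂, hS₁, hS₂, hfj₁, hfj₂⟩ | ⟨j, S, hj, hS, hfj⟩
    exacts [⟨_, Or.inl ⟨j₁, S₁, j₂, S₂, hj, hj₁, hj₂, hj₁S₂, hS₁, hS₂, rfl⟩, hfj₁, hfj₂⟩,
      ⟨_, Or.inr ⟨j, S, hj, hS, rfl⟩, hfj⟩]
  · rintro A (⟨j₁, S₁, j₂, S₂, hj, hj₁, hj₂, hj₁S₂, hS₁, hS₂, rfl⟩ | ⟨j, S, hj, hS, rfl⟩)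
    · refine (dimH_setOf_mem_span_image_and_mem_span_image_le hj hj₁ hj₂ hj₁S₂).trans
        (Nat.cast_le.2 ?_)
      have : Nontrivial V := ⟨⟨j₁, j₂, hj⟩⟩
      obtain ⟨k, hk⟩ := Nat.exists_eq_add_of_le' (Fintype.one_lt_card (α := V))
      rw [hk, Nat.add_sub_cancel, add_mul]
      omega
    · refine (dimH_setOf_mem_span_image_le hj).trans (Nat.cast_le.2 ?_)
      have : Nonempty V := ⟨j⟩
      obtain ⟨k, hk⟩ := Nat.exists_eq_add_of_le' (Fintype.card_pos (α := V))
      rw [hk, Nat.add_sub_cancel, add_mul]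
      omega

theorem degenerate_set_small_general (d : ℕ) (n : Fin (d + 1) → ℕ) :
    ∃ (ι : Type) (_ : Finite ι)
      (A : ι → Set (((i : Fin (d + 1)) × Fin (n i)) → EuclideanSpace ℝ (Fin d))),
      {f : ((i : Fin (d + 1)) × Fin (n i)) → EuclideanSpace ℝ (Fin d) |
          ∃ ρ₁ ρ₂ : Finset ((i : Fin (d + 1)) × Fin (n i)),
            IsColorful ρ₁ ∧ IsColorful ρ₂ ∧ ρ₁.card = d ∧ ρ₂.card = d ∧ ρ₁ ≠ ρ₂ ∧
            (0 : EuclideanSpace ℝ (Fin d)) ∈ affineSpan ℝ (f '' ↑ρ₁) ∧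
            (0 : EuclideanSpace ℝ (Fin d)) ∈ affineSpan ℝ (f '' ↑ρ₂)}
        ⊆ (⋃ i, A i) ∧
      (∀ i, dimH (A i) ≤ (d * (∑ i, n i) - 2 : ℕ)) := by
  obtain ⟨𝒜, h𝒜, hcover, hdim⟩ := exists_finite_cover_dimH_le_of_mem_affineSpan_of_ne
    (V := (i : Fin (d + 1)) × Fin (n i)) (E := EuclideanSpace ℝ (Fin d))
  rw [finrank_euclideanSpace_fin] at hcover
  refine ⟨𝒜, h𝒜.to_subtype, Subtype.val, ?_, fun A => ?_⟩
  · rintro f ⟨ρ₁, ρ₂, -, -, h₁, h₂, hne, hf₁, hf₂⟩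
    rw [← Set.sUnion_eq_iUnion]
    exact hcover ⟨ρ₁, ρ₂, h₁.le, h₂.le, hne, hf₁, hf₂⟩
  · simpa [finrank_euclideanSpace_fin, Fintype.card_sigma, mul_comm] using hdim A A.2

/-- **Codimension-2 bound for degenerate configurations.** The set of configurations
for which the origin lies on the affine hulls of two distinct colorful
`(d-1)`-simplices simultaneously is contained in a finite union of sets of
(Hausdorff) dimension at most `d·(n 0 + ⋯ + n d) - 2`. -/
theorem degenerate_set_small (d : ℕ) (n : Fin (d + 1) → ℕ) (hn : ∀ i, 2 ≤ n i) :
    ∃ (ι : Type) (_ : Finite ι)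
      (A : ι → Set (((i : Fin (d + 1)) × Fin (n i)) → EuclideanSpace ℝ (Fin d))),
      {f : ((i : Fin (d + 1)) × Fin (n i)) → EuclideanSpace ℝ (Fin d) |
          ∃ ρ₁ ρ₂ : Finset ((i : Fin (d + 1)) × Fin (n i)),
            IsColorful ρ₁ ∧ IsColorful ρ₂ ∧ ρ₁.card = d ∧ ρ₂.card = d ∧ ρ₁ ≠ ρ₂ ∧
            (0 : EuclideanSpace ℝ (Fin d)) ∈ affineSpan ℝ (f '' ↑ρ₁) ∧
            (0 : EuclideanSpace ℝ (Fin d)) ∈ affineSpan ℝ (f '' ↑ρ₂)}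
        ⊆ (⋃ i, A i) ∧
      (∀ i, dimH (A i) ≤ (d * (∑ i, n i) - 2 : ℕ)) :=
  degenerate_set_small_general d n
end

section
/- For the configuration of Example with color classes Δ_i = {a^i, b^i_1, ..., b^i_{n_i-1}}, the avoiding complex Av collapses through a sequence of elementary collapses onto the boundary complex of the simplex {a^0, ..., a^d}; in particular Av is homotopy equivalent to S^{d-1}. -/
open Finset

/-- The geometric realization of a simplicial complex `K` on the finite vertex set
`V`: convex combinations of vertices whose support is a face of `K`. -/
def realization {V : Type*} [Fintype V] (K : Finset V → Prop) : Set (V → ℝ) :=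
  {f | (∀ v, 0 ≤ f v) ∧ ∑ v, f v = 1 ∧ ∃ σ : Finset V, K σ ∧ Function.support f = ↑σ}

/-- An elementary (generalized) collapse: remove all faces between a free face `τ`
and the unique maximal face `σ` containing it. -/
def CollapseStep {V : Type*} [DecidableEq V] (K K' : Finset (Finset V)) : Prop :=
  ∃ τ σ : Finset V, τ ∈ K ∧ σ ∈ K ∧ τ ⊂ σ ∧
    (∀ γ ∈ K, τ ⊆ γ → γ ⊆ σ) ∧
    K' = K.filter (fun γ => ¬ τ ⊆ γ)

/-- The avoiding complex of the extremal example with color classes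
`Δ i = {a^i, b^i_1, …, b^i_{n i - 1}}` (here `a^i = ⟨i, 0⟩`): all colorful faces
except the two kinds of hitting `d`-simplices, namely the all-special transversal
and the all-nonspecial transversals. -/
noncomputable def exampleAvoiding (d : ℕ) (n : Fin (d + 1) → ℕ) [∀ i, NeZero (n i)] :
    Finset (Finset ((i : Fin (d + 1)) × Fin (n i))) := by
  classical
  exact Finset.univ.filter (fun σ => IsColorful σ ∧
    ¬ (σ.card = d + 1 ∧ ((∀ v ∈ σ, (v.2 : ℕ) = 0) ∨ (∀ v ∈ σ, (v.2 : ℕ) ≠ 0))))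

/-- The boundary complex of the special simplex `{a^0, …, a^d}`: proper subsets of
the set of special vertices. -/
noncomputable def specialBoundary (d : ℕ) (n : Fin (d + 1) → ℕ) [∀ i, NeZero (n i)] :
    Finset (Finset ((i : Fin (d + 1)) × Fin (n i))) := by
  classical
  exact Finset.univ.filter (fun σ => IsColorful σ ∧ σ.card ≤ d ∧ ∀ v ∈ σ, (v.2 : ℕ) = 0)

/-!
Pair every face `γ` of the avoiding complex that has a nonspecial vertex with `γ ∪ {a^m}` or
`γ ∖ {a^m}`, where `m` is the least color on which `γ` has no nonspecial vertex; such a color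
exists because the all-nonspecial transversals are not faces, and adding or removing `a^m` does
not change `m`. The unpaired faces are the all-special ones, i.e. the boundary of
`{a^0, …, a^d}`. Removing the pairs in decreasing lexicographic order of (size of the larger
face, number of nonspecial vertices) leaves the smaller face of the current pair free, so every
removal is an elementary collapse.

An elementary collapse of a free face `τ ⊂ σ` is a homotopy equivalence of realizations: the
radial projection from the reflection of the barycenter of `σ ∖ τ` in the barycenter of `τ`
retracts `|K|` onto `|K ∖ star τ|` along straight segments. Finally the boundary of a
`d`-simplex is the frontier of a convex body in `ℝ^d`, hence homeomorphic to the unit sphere.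
-/

open scoped ContinuousMap

theorem nonempty_homotopyEquiv_of_straightLine_retraction {E : Type*} [TopologicalSpace E]
    [AddCommGroup E] [Module ℝ E] [IsTopologicalAddGroup E] [ContinuousSMul ℝ E]
    {A B : Set E} (hBA : B ⊆ A) {r : E → E} (hr : ContinuousOn r A) (hrB : Set.MapsTo r A B)
    (hfix : Set.EqOn r id B) (hseg : ∀ x ∈ A, segment ℝ (r x) x ⊆ A) : Nonempty (A ≃ₕ B) := by
  let ρ : C(A, B) := ⟨hrB.restrict, hr.mapsToRestrict hrB⟩
  let ι : C(B, A) := ⟨Set.inclusion hBA, continuous_inclusion hBA⟩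
  have hρι : ρ.comp ι = ContinuousMap.id B := ContinuousMap.ext fun x => Subtype.ext (hfix x.2)
  let H := ContinuousMap.Homotopy.affine ⟨fun x : A => r x, hr.domRestrict⟩
    ⟨Subtype.val, continuous_subtype_val⟩
  refine ⟨⟨ρ, ι, ⟨?_⟩, hρι ▸ .refl _⟩⟩
  exact
    { toFun := fun p => ⟨H p, hseg _ p.2.2 (by
        rw [segment_eq_image_lineMap]; exact ⟨p.1, p.1.2, rfl⟩)⟩
      continuous_toFun := H.continuous.subtype_mk _
      map_zero_left := fun x => Subtype.ext (H.apply_zero x)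
      map_one_left := fun x => Subtype.ext (H.apply_one x) }

section Collapse

variable {V : Type*}

noncomputable def collapseParam {τ : Finset V} (hτ : τ.Nonempty) (f : V → ℝ) : ℝ :=
  (#τ / 2 : ℝ) * τ.inf' hτ f

section Fintype

variable [Fintype V]

lemma realization_mono {K L : Finset V → Prop} (h : ∀ σ, K σ → L σ) :
    realization K ⊆ realization L :=
  fun _ ⟨hf0, hf1, σ, hσ, hsupp⟩ => ⟨hf0, hf1, σ, h σ hσ, hsupp⟩

lemma mem_realization_iff_of_isLowerSet {K : Finset (Finset V)}
    (hK : IsLowerSet (K : Set (Finset V))) {f : V → ℝ} :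
    f ∈ realization (· ∈ K) ↔ f ∈ stdSimplex ℝ V ∧ ∃ ρ ∈ K, ∀ w ∉ ρ, f w = 0 := by
  classical
  constructor
  · rintro ⟨hf0, hf1, ρ, hρ, hsupp⟩
    exact ⟨⟨hf0, hf1⟩, ρ, hρ, fun w hw => Function.notMem_support.mp (hsupp ▸ hw)⟩
  · rintro ⟨⟨hf0, hf1⟩, ρ, hρ, hvan⟩
    refine ⟨hf0, hf1, univ.filter (f · ≠ 0), hK (fun w hw => ?_) hρ, by ext; simp⟩
    by_contra hwρ
    exact (mem_filter.mp hw).2 (hvan w hwρ)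

variable {τ : Finset V} {hτ : τ.Nonempty} {f : V → ℝ}

lemma inf'_nonneg_of_mem_stdSimplex (hf : f ∈ stdSimplex ℝ V) : 0 ≤ τ.inf' hτ f :=
  le_inf' hτ f fun w _ => hf.1 w

lemma collapseParam_nonneg (hf : f ∈ stdSimplex ℝ V) : 0 ≤ collapseParam hτ f :=
  mul_nonneg (by positivity) (inf'_nonneg_of_mem_stdSimplex hf)

lemma collapseParam_le_half (hf : f ∈ stdSimplex ℝ V) : collapseParam hτ f ≤ 1 / 2 := by
  have hsum : #τ * τ.inf' hτ f ≤ 1 := calc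
    #τ * τ.inf' hτ f ≤ ∑ w ∈ τ, f w := by
      rw [← nsmul_eq_mul]; exact card_nsmul_le_sum τ f _ fun w hw => inf'_le f hw
    _ ≤ ∑ w, f w := sum_le_univ_sum_of_nonneg hf.1
    _ = 1 := hf.2
  rw [collapseParam]
  linarith

lemma inf'_eq_zero_or_eq_zero_of_notMem {K : Finset (Finset V)} {σ : Finset V}
    (hfree : ∀ γ ∈ K, τ ⊆ γ → γ ⊆ σ) (hf : f ∈ realization (· ∈ K)) :
    τ.inf' hτ f = 0 ∨ ∀ w ∉ σ, f w = 0 := by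
  obtain ⟨hf0, hf1, ρ, hρK, hsupp⟩ := hf
  refine (inf'_nonneg_of_mem_stdSimplex ⟨hf0, hf1⟩).eq_or_lt.imp Eq.symm fun hpos w hw => ?_
  have hτρ : τ ⊆ ρ := fun u hu => by
    rw [← mem_coe, ← hsupp]
    exact (hpos.trans_le (inf'_le f hu)).ne'
  by_contra hfw
  exact hw (hfree ρ hρK hτρ (by rw [← mem_coe, ← hsupp]; exact hfw))

end Fintype

variable [DecidableEq V]

noncomputable def uniformWeights (s : Finset V) : V → ℝ :=
  fun w => if w ∈ s then (#s : ℝ)⁻¹ else 0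

noncomputable def collapseCenter (τ σ : Finset V) : V → ℝ :=
  2 • uniformWeights τ - uniformWeights (σ \ τ)

/-- The radial projection `q + (1 - λ)⁻¹ • (f - q)` from `q = collapseCenter τ σ`; since `q` is
`2 / #τ` on `τ`, the ratio `λ = collapseParam hτ f` makes the least `τ`-coordinate vanish. -/
noncomputable def collapseRetraction {τ : Finset V} (hτ : τ.Nonempty) (σ : Finset V)
    (f : V → ℝ) : V → ℝ :=
  (1 - collapseParam hτ f)⁻¹ • (f - collapseParam hτ f • collapseCenter τ σ)

variable {τ σ : Finset V} {hτ : τ.Nonempty} {f : V → ℝ}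

lemma collapseRetraction_apply (w : V) :
    collapseRetraction hτ σ f w =
      (1 - collapseParam hτ f)⁻¹ * (f w - collapseParam hτ f * collapseCenter τ σ w) := rfl

lemma collapseParam_mul_collapseCenter_of_mem {w : V} (hw : w ∈ τ) :
    collapseParam hτ f * collapseCenter τ σ w = τ.inf' hτ f := by
  have hk : (#τ : ℝ) ≠ 0 := Nat.cast_ne_zero.mpr hτ.card_ne_zero
  simp [collapseParam, collapseCenter, uniformWeights, hw]
  field_simp

lemma collapseCenter_nonpos_of_notMem {w : V} (hw : w ∉ τ) : collapseCenter τ σ w ≤ 0 := by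
  simp only [collapseCenter, uniformWeights, Pi.sub_apply, Pi.smul_apply, if_neg hw, smul_zero]
  split_ifs <;> simp

lemma collapseCenter_eq_zero_of_notMem (hτσ : τ ⊆ σ) {w : V} (hw : w ∉ σ) :
    collapseCenter τ σ w = 0 := by
  have hwτ : w ∉ τ := fun h => hw (hτσ h)
  simp [collapseCenter, uniformWeights, hw, hwτ]

lemma collapseRetraction_eq_self (h : τ.inf' hτ f = 0) : collapseRetraction hτ σ f = f := by
  simp [collapseRetraction, collapseParam, h]

lemma collapseRetraction_apply_eq_zero (hτσ : τ ⊆ σ) {w : V} (hw : w ∉ σ) (hfw : f w = 0) :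
    collapseRetraction hτ σ f w = 0 := by
  simp [collapseRetraction_apply, hfw, collapseCenter_eq_zero_of_notMem hτσ hw]

lemma collapseRetraction_apply_eq_zero_of_eq_inf' {u : V} (hu : u ∈ τ)
    (hfu : f u = τ.inf' hτ f) : collapseRetraction hτ σ f u = 0 := by
  simp [collapseRetraction_apply, collapseParam_mul_collapseCenter_of_mem hu, hfu]

variable {K K' L : Finset (Finset V)}

lemma CollapseStep.subset (h : CollapseStep K K') : K' ⊆ K := by
  obtain ⟨τ, σ, -, -, -, -, rfl⟩ := h
  exact filter_subset _ _

lemma isLowerSet_filter_not_supset (hK : IsLowerSet (K : Set (Finset V))) (τ : Finset V) :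
    IsLowerSet (K.filter (¬ τ ⊆ ·) : Set (Finset V)) := by
  rw [coe_filter]
  exact hK.inter (isUpperSet_Ici τ).compl

lemma CollapseStep.isLowerSet (h : CollapseStep K K') (hK : IsLowerSet (K : Set (Finset V))) :
    IsLowerSet (K' : Set (Finset V)) := by
  obtain ⟨τ, σ, -, -, -, -, rfl⟩ := h
  exact isLowerSet_filter_not_supset hK τ

lemma subset_of_reflTransGen_collapseStep (h : Relation.ReflTransGen CollapseStep K L) :
    L ⊆ K := by
  induction h with
  | refl => exact subset_rfl
  | tail _ hstep ih => exact hstep.subset.trans ih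

variable [Fintype V]

lemma sum_uniformWeights {s : Finset V} (hs : s.Nonempty) : ∑ w, uniformWeights s w = 1 := by
  simp [uniformWeights, Finset.sum_ite_mem, hs.card_ne_zero]

lemma sum_collapseCenter (hτ : τ.Nonempty) (hτσ : τ ⊂ σ) : ∑ w, collapseCenter τ σ w = 1 := by
  simp only [collapseCenter, Pi.sub_apply, Pi.smul_apply, sum_sub_distrib, ← smul_sum,
    sum_uniformWeights hτ, sum_uniformWeights (sdiff_nonempty.mpr hτσ.2)]
  norm_num

lemma collapseRetraction_mem_stdSimplex (hτσ : τ ⊂ σ) (hf : f ∈ stdSimplex ℝ V) :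
    collapseRetraction hτ σ f ∈ stdSimplex ℝ V := by
  have ht0 := collapseParam_nonneg (hτ := hτ) hf
  have ht1 := collapseParam_le_half (hτ := hτ) hf
  refine ⟨fun w => ?_, ?_⟩
  · rw [collapseRetraction_apply]
    refine mul_nonneg (inv_nonneg.mpr (by linarith)) (sub_nonneg.mpr ?_)
    by_cases hw : w ∈ τ
    · rw [collapseParam_mul_collapseCenter_of_mem hw]; exact inf'_le f hw
    · exact (mul_nonpos_of_nonneg_of_nonpos ht0 (collapseCenter_nonpos_of_notMem hw)).trans
        (hf.1 w)
  · simp only [collapseRetraction_apply, ← mul_sum, sum_sub_distrib, hf.2,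
      sum_collapseCenter hτ hτσ, mul_one]
    exact inv_mul_cancel₀ (by linarith)

lemma continuousOn_collapseRetraction :
    ContinuousOn (collapseRetraction hτ σ) (stdSimplex ℝ V) := by
  have ht : Continuous (collapseParam hτ) :=
    continuous_const.mul (Continuous.finset_inf'_apply hτ fun w _ => continuous_apply w)
  refine ((continuous_const.sub ht).continuousOn.inv₀ fun f hf => ?_).smul
    (continuous_id.sub (ht.smul continuous_const)).continuousOn
  have := collapseParam_le_half (hτ := hτ) hf
  simp only [Pi.sub_apply]
  linarith

section FreeFace

variable (hK : IsLowerSet (K : Set (Finset V))) (hσK : σ ∈ K)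
  (hτσ : τ ⊂ σ) (hfree : ∀ γ ∈ K, τ ⊆ γ → γ ⊆ σ)
include hK hσK hτσ hfree

lemma collapseRetraction_mem_realization (hf : f ∈ realization (· ∈ K)) :
    collapseRetraction hτ σ f ∈ realization (· ∈ K.filter (¬ τ ⊆ ·)) := by
  obtain ⟨u, hu, hfu⟩ := exists_mem_eq_inf' hτ f
  obtain ⟨ρ, hρK, hvan⟩ : ∃ ρ ∈ K, ∀ w ∉ ρ, collapseRetraction hτ σ f w = 0 := by
    rcases inf'_eq_zero_or_eq_zero_of_notMem hfree hf with h | h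
    · rw [collapseRetraction_eq_self h]
      exact ((mem_realization_iff_of_isLowerSet hK).mp hf).2
    · exact ⟨σ, hσK, fun w hw => collapseRetraction_apply_eq_zero hτσ.1 hw (h w hw)⟩
  refine (mem_realization_iff_of_isLowerSet (isLowerSet_filter_not_supset hK τ)).mpr
    ⟨collapseRetraction_mem_stdSimplex hτσ ⟨hf.1, hf.2.1⟩, ρ.erase u,
      mem_filter.mpr ⟨hK (erase_subset u ρ) hρK, fun h => notMem_erase u ρ (h hu)⟩,
      fun w hw => ?_⟩
  rcases eq_or_ne w u with rfl | hwu
  · exact collapseRetraction_apply_eq_zero_of_eq_inf' hu hfu.symm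
  · exact hvan w fun h => hw (mem_erase.mpr ⟨hwu, h⟩)

lemma segment_collapseRetraction_subset (hf : f ∈ realization (· ∈ K)) :
    segment ℝ (collapseRetraction hτ σ f) f ⊆ realization (· ∈ K) := by
  have hf' : f ∈ stdSimplex ℝ V := ⟨hf.1, hf.2.1⟩
  rcases inf'_eq_zero_or_eq_zero_of_notMem hfree hf with h | h
  · rw [collapseRetraction_eq_self h, segment_same]
    exact Set.singleton_subset_iff.mpr hf
  intro g hg
  refine (mem_realization_iff_of_isLowerSet hK).mpr ⟨(convex_stdSimplex ℝ V).segment_subset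
    (collapseRetraction_mem_stdSimplex hτσ hf') hf' hg, σ, hσK, fun w hw => ?_⟩
  obtain ⟨a, b, -, -, -, rfl⟩ := hg
  simp [collapseRetraction_apply_eq_zero hτσ.1 hw (h w hw), h w hw]

end FreeFace

lemma collapseRetraction_eq_self_of_mem_realization
    (hf : f ∈ realization (· ∈ K.filter (¬ τ ⊆ ·))) : collapseRetraction hτ σ f = f := by
  obtain ⟨hf0, hf1, ρ, hρ, hsupp⟩ := hf
  obtain ⟨u, huτ, huρ⟩ := not_subset.mp (mem_filter.mp hρ).2
  have hfu : f u = 0 := Function.notMem_support.mp (hsupp ▸ huρ)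
  exact collapseRetraction_eq_self
    (le_antisymm (hfu ▸ inf'_le f huτ) (inf'_nonneg_of_mem_stdSimplex ⟨hf0, hf1⟩))

theorem CollapseStep.nonempty_homotopyEquiv (h : CollapseStep K K')
    (hK : IsLowerSet (K : Set (Finset V))) (hK' : K'.Nonempty) :
    Nonempty (realization (· ∈ K) ≃ₕ realization (· ∈ K')) := by
  obtain ⟨τ, σ, -, hσK, hτσ, hfree, rfl⟩ := h
  have hτ : τ.Nonempty := by
    rw [nonempty_iff_ne_empty]
    rintro rfl
    simp at hK'
  exact nonempty_homotopyEquiv_of_straightLine_retraction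
    (realization_mono fun _ hρ => (mem_filter.mp hρ).1) (r := collapseRetraction hτ σ)
    (continuousOn_collapseRetraction.mono fun f hf => ⟨hf.1, hf.2.1⟩)
    (fun _ => collapseRetraction_mem_realization hK hσK hτσ hfree)
    (fun _ => collapseRetraction_eq_self_of_mem_realization)
    (fun _ => segment_collapseRetraction_subset hK hσK hτσ hfree)

theorem nonempty_homotopyEquiv_of_reflTransGen_collapseStep
    (h : Relation.ReflTransGen CollapseStep K L) (hK : IsLowerSet (K : Set (Finset V)))
    (hL : L.Nonempty) : Nonempty (realization (· ∈ K) ≃ₕ realization (· ∈ L)) := by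
  induction h using Relation.ReflTransGen.head_induction_on with
  | refl => exact ⟨.refl _⟩
  | head hstep hrest ih =>
    obtain ⟨e⟩ := ih (hstep.isLowerSet hK)
    obtain ⟨e'⟩ := hstep.nonempty_homotopyEquiv hK
      (hL.mono (subset_of_reflTransGen_collapseStep hrest))
    exact ⟨e'.trans e⟩

end Collapse

section SimplexBoundary

open Topology

def simplexBoundary (ι : Type*) [Fintype ι] : Set (ι → ℝ) :=
  stdSimplex ℝ ι ∩ {g | ∃ i, g i = 0}

variable {d : ℕ}

/-- Barycentric coordinates with respect to the vertices `e_0, …, e_{d-1}, 0`. -/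
def baryCoords (y : EuclideanSpace ℝ (Fin d)) : Fin (d + 1) → ℝ :=
  Fin.snoc (α := fun _ => ℝ) (fun i => y i) (1 - ∑ i, y i)

def ofBaryCoords (g : Fin (d + 1) → ℝ) : EuclideanSpace ℝ (Fin d) :=
  WithLp.toLp 2 (Fin.init g)

def cornerSimplex (d : ℕ) : Set (EuclideanSpace ℝ (Fin d)) :=
  baryCoords ⁻¹' stdSimplex ℝ (Fin (d + 1))

lemma continuous_baryCoords : Continuous (baryCoords (d := d)) :=
  Continuous.finSnoc (continuous_pi fun i => PiLp.continuous_apply 2 _ i)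
    (continuous_const.sub (continuous_finsetSum _ fun i _ => PiLp.continuous_apply 2 _ i))

lemma continuous_ofBaryCoords : Continuous (ofBaryCoords (d := d)) :=
  (PiLp.continuous_toLp 2 _).comp (continuous_pi fun _ => continuous_apply _)

lemma sum_baryCoords (y : EuclideanSpace ℝ (Fin d)) : ∑ j, baryCoords y j = 1 := by
  simp [baryCoords, Fin.sum_univ_castSucc]

lemma ofBaryCoords_baryCoords (y : EuclideanSpace ℝ (Fin d)) : ofBaryCoords (baryCoords y) = y := by
  simp [ofBaryCoords, baryCoords]

lemma baryCoords_ofBaryCoords {g : Fin (d + 1) → ℝ} (hg : ∑ j, g j = 1) :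
    baryCoords (ofBaryCoords g) = g := by
  rw [Fin.sum_univ_castSucc] at hg
  have : ∑ i, Fin.init g i = ∑ i : Fin d, g i.castSucc := rfl
  simp only [baryCoords, ofBaryCoords, ← hg, this, add_sub_cancel_left]
  exact Fin.snoc_init_self g

lemma baryCoords_add_smul {a b : ℝ} (hab : a + b = 1) (y z : EuclideanSpace ℝ (Fin d)) :
    baryCoords (a • y + b • z) = a • baryCoords y + b • baryCoords z := by
  funext j
  induction j using Fin.lastCases with
  | last => simp [baryCoords, sum_add_distrib, ← mul_sum]; linear_combination -hab
  | cast i => simp [baryCoords]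

lemma baryCoords_centroid :
    baryCoords (WithLp.toLp 2 fun _ : Fin d => ((d : ℝ) + 1)⁻¹) = fun _ => ((d : ℝ) + 1)⁻¹ := by
  funext j
  induction j using Fin.lastCases with
  | last => simp [baryCoords]; field_simp; ring
  | cast i => simp [baryCoords]

lemma interior_cornerSimplex : interior (cornerSimplex d) = {y | ∀ j, 0 < baryCoords y j} := by
  refine subset_antisymm (fun y hy => ?_) (interior_maximal
    (fun y hy => ⟨fun j => (hy j).le, sum_baryCoords y⟩) ?_)
  -- Pushed slightly away from the centroid `c`, a point with a vanishing barycentric coordinate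
  -- leaves the simplex.
  · set c : EuclideanSpace ℝ (Fin d) := WithLp.toLp 2 fun _ => ((d : ℝ) + 1)⁻¹
    have hnear : ∀ᶠ s in 𝓝 (1 : ℝ), AffineMap.lineMap c y s ∈ cornerSimplex d :=
      AffineMap.lineMap_continuous.continuousAt.preimage_mem_nhds
        (by rw [AffineMap.lineMap_apply_one]; exact mem_interior_iff_mem_nhds.mp hy)
    obtain ⟨s, hs, hs1⟩ :=
      ((hnear.filter_mono nhdsWithin_le_nhds).and (self_mem_nhdsWithin (s := Set.Ioi 1))).exists
    have hy' : y ∈ cornerSimplex d := interior_subset hy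
    intro j
    refine (hy'.1 j).lt_of_ne' fun hyj => ?_
    have := hs.1 j
    rw [AffineMap.lineMap_apply_module, baryCoords_add_smul (by ring), baryCoords_centroid] at this
    simp only [Pi.add_apply, Pi.smul_apply, smul_eq_mul, hyj, mul_zero, add_zero] at this
    have : (1 - s) * ((d : ℝ) + 1)⁻¹ < 0 :=
      mul_neg_of_neg_of_pos (by linarith [show (1 : ℝ) < s from hs1]) (by positivity)
    linarith
  · simp only [Set.ofPred_forall]
    exact isOpen_iInter_of_finite fun j =>
      isOpen_lt continuous_const ((continuous_apply j).comp continuous_baryCoords)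

lemma frontier_cornerSimplex : frontier (cornerSimplex d) = baryCoords ⁻¹' simplexBoundary _ := by
  have hclosed : IsClosed (cornerSimplex d) :=
    (isClosed_stdSimplex ℝ _).preimage continuous_baryCoords
  ext y
  simp only [hclosed.frontier_eq, interior_cornerSimplex, Set.mem_sdiff, Set.mem_ofPred_eq,
    Set.mem_preimage, simplexBoundary, Set.mem_inter_iff, not_forall, not_lt]
  exact and_congr_right fun hy => exists_congr fun j => ⟨fun h => le_antisymm h (hy.1 j), le_of_eq⟩

lemma convex_cornerSimplex : Convex ℝ (cornerSimplex d) := fun y hy z hz a b ha hb hab => by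
  change baryCoords _ ∈ stdSimplex ℝ _
  rw [baryCoords_add_smul hab]
  exact convex_stdSimplex ℝ _ hy hz ha hb hab

lemma isBounded_cornerSimplex : Bornology.IsBounded (cornerSimplex d) :=
  ((isCompact_stdSimplex ℝ _).image continuous_ofBaryCoords).isBounded.subset
    fun y hy => ⟨baryCoords y, hy, ofBaryCoords_baryCoords y⟩

lemma interior_cornerSimplex_nonempty : (interior (cornerSimplex d)).Nonempty := by
  refine ⟨WithLp.toLp 2 fun _ => ((d : ℝ) + 1)⁻¹, ?_⟩
  rw [interior_cornerSimplex, Set.mem_ofPred_eq, baryCoords_centroid]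
  exact fun _ => by positivity

lemma ofBaryCoords_mem_frontier {g : Fin (d + 1) → ℝ} (hg : g ∈ simplexBoundary _) :
    ofBaryCoords g ∈ frontier (cornerSimplex d) := by
  rw [frontier_cornerSimplex, Set.mem_preimage, baryCoords_ofBaryCoords hg.1.2]
  exact hg

lemma baryCoords_mem_simplexBoundary {y : EuclideanSpace ℝ (Fin d)}
    (hy : y ∈ frontier (cornerSimplex d)) : baryCoords y ∈ simplexBoundary _ := by
  rwa [frontier_cornerSimplex] at hy

def simplexBoundaryHomeomorphFrontier :
    simplexBoundary (Fin (d + 1)) ≃ₜ frontier (cornerSimplex d) where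
  toFun g := ⟨ofBaryCoords g, ofBaryCoords_mem_frontier g.2⟩
  invFun y := ⟨baryCoords y, baryCoords_mem_simplexBoundary y.2⟩
  left_inv g := Subtype.ext (baryCoords_ofBaryCoords g.2.1.2)
  right_inv y := Subtype.ext (ofBaryCoords_baryCoords y.1)
  continuous_toFun := (continuous_ofBaryCoords.comp continuous_subtype_val).subtype_mk _
  continuous_invFun := (continuous_baryCoords.comp continuous_subtype_val).subtype_mk _

theorem nonempty_homeomorph_simplexBoundary_sphere (d : ℕ) :
    Nonempty (simplexBoundary (Fin (d + 1)) ≃ₜ Metric.sphere (0 : EuclideanSpace ℝ (Fin d)) 1) := by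
  obtain ⟨h, -, -, hfrontier⟩ := exists_homeomorph_image_interior_closure_frontier_eq_unitBall
    convex_cornerSimplex interior_cornerSimplex_nonempty isBounded_cornerSimplex
  exact ⟨simplexBoundaryHomeomorphFrontier.trans ((h.image _).trans (.setCongr hfrontier))⟩

end SimplexBoundary

section Example

variable {d : ℕ} {n : Fin (d + 1) → ℕ}

abbrev Vertex (n : Fin (d + 1) → ℕ) := (i : Fin (d + 1)) × Fin (n i)

lemma IsColorful.card_le {σ : Finset (Vertex n)} (h : IsColorful σ) : #σ ≤ d + 1 := by
  simpa using card_le_card_of_injOn Sigma.fst (fun v _ => mem_coe.mpr (mem_univ v.1))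
    fun v hv w hw => h v hv w hw

lemma IsColorful.card_eq_of_forall_exists {σ : Finset (Vertex n)} (h : IsColorful σ)
    (hall : ∀ i, ∃ v ∈ σ, v.1 = i) : #σ = d + 1 := by
  have himage : σ.image Sigma.fst = univ := eq_univ_of_forall fun i => mem_image.mpr (hall i)
  rw [← card_image_of_injOn fun v hv w hw => h v hv w hw, himage, card_univ, Fintype.card_fin]

lemma IsColorful.subset {σ ρ : Finset (Vertex n)} (h : IsColorful σ) (hρ : ρ ⊆ σ) :
    IsColorful ρ :=
  fun v hv w hw => h v (hρ hv) w (hρ hw)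

def freeColors (σ : Finset (Vertex n)) : Finset (Fin (d + 1)) :=
  univ.filter fun i => ∀ v ∈ σ, v.1 = i → (v.2 : ℕ) = 0

lemma mem_freeColors {σ : Finset (Vertex n)} {i : Fin (d + 1)} :
    i ∈ freeColors σ ↔ ∀ v ∈ σ, v.1 = i → (v.2 : ℕ) = 0 := by
  simp [freeColors]

lemma freeColors_insert {σ : Finset (Vertex n)} {w : Vertex n} (hw : (w.2 : ℕ) = 0) :
    freeColors (insert w σ) = freeColors σ := by
  ext i
  simp [mem_freeColors, hw]

lemma freeColors_erase {σ : Finset (Vertex n)} {w : Vertex n} (hw : (w.2 : ℕ) = 0) :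
    freeColors (σ.erase w) = freeColors σ := by
  by_cases hwσ : w ∈ σ
  · rw [← freeColors_insert (σ := σ.erase w) hw, insert_erase hwσ]
  · rw [erase_eq_of_notMem hwσ]

def matchColor (σ : Finset (Vertex n)) : Fin (d + 1) :=
  if h : (freeColors σ).Nonempty then (freeColors σ).min' h else 0

lemma matchColor_insert {σ : Finset (Vertex n)} {w : Vertex n} (hw : (w.2 : ℕ) = 0) :
    matchColor (insert w σ) = matchColor σ := by
  simp only [matchColor, freeColors_insert hw]

lemma matchColor_erase {σ : Finset (Vertex n)} {w : Vertex n} (hw : (w.2 : ℕ) = 0) :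
    matchColor (σ.erase w) = matchColor σ := by
  simp only [matchColor, freeColors_erase hw]

variable [∀ i, NeZero (n i)]

lemma mem_exampleAvoiding {σ : Finset (Vertex n)} :
    σ ∈ exampleAvoiding d n ↔ IsColorful σ ∧
      ¬(#σ = d + 1 ∧ ((∀ v ∈ σ, (v.2 : ℕ) = 0) ∨ (∀ v ∈ σ, (v.2 : ℕ) ≠ 0))) := by
  simp [exampleAvoiding]

lemma mem_specialBoundary {σ : Finset (Vertex n)} :
    σ ∈ specialBoundary d n ↔ IsColorful σ ∧ #σ ≤ d ∧ ∀ v ∈ σ, (v.2 : ℕ) = 0 := by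
  simp [specialBoundary]

lemma isLowerSet_exampleAvoiding :
    IsLowerSet (exampleAvoiding d n : Set (Finset (Vertex n))) := by
  intro σ ρ hρσ hσ
  rw [mem_coe, mem_exampleAvoiding] at hσ ⊢
  refine ⟨hσ.1.subset hρσ, fun ⟨hcard, hall⟩ => hσ.2 ?_⟩
  obtain rfl : ρ = σ := eq_of_subset_of_card_le hρσ (hcard ▸ hσ.1.card_le)
  exact ⟨hcard, hall⟩

lemma specialBoundary_subset_exampleAvoiding : specialBoundary d n ⊆ exampleAvoiding d n := by
  intro σ hσ
  rw [mem_specialBoundary] at hσ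
  exact mem_exampleAvoiding.mpr ⟨hσ.1, fun h => by omega⟩

lemma mem_specialBoundary_iff_of_mem_exampleAvoiding {σ : Finset (Vertex n)}
    (hσ : σ ∈ exampleAvoiding d n) : σ ∈ specialBoundary d n ↔ ∀ v ∈ σ, (v.2 : ℕ) = 0 := by
  rw [mem_exampleAvoiding] at hσ
  refine ⟨fun h => (mem_specialBoundary.mp h).2.2, fun hsp => mem_specialBoundary.mpr
    ⟨hσ.1, ?_, hsp⟩⟩
  have := hσ.1.card_le
  have : #σ ≠ d + 1 := fun h => hσ.2 ⟨h, Or.inl hsp⟩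
  omega

lemma freeColors_nonempty {σ : Finset (Vertex n)} (hσ : σ ∈ exampleAvoiding d n) :
    (freeColors σ).Nonempty := by
  rw [mem_exampleAvoiding] at hσ
  by_contra hempty
  have hcolor : ∀ i, ∃ v ∈ σ, v.1 = i ∧ (v.2 : ℕ) ≠ 0 := fun i => by
    simpa [mem_freeColors] using fun hi => hempty ⟨i, hi⟩
  refine hσ.2 ⟨hσ.1.card_eq_of_forall_exists fun i => ?_, Or.inr fun v hv => ?_⟩
  · obtain ⟨v, hv, hvi, -⟩ := hcolor i
    exact ⟨v, hv, hvi⟩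
  · obtain ⟨w, hw, hwv, hwns⟩ := hcolor v.1
    rwa [hσ.1 v hv w hw hwv.symm]

lemma matchColor_mem_freeColors {σ : Finset (Vertex n)} (hσ : σ ∈ exampleAvoiding d n) :
    matchColor σ ∈ freeColors σ := by
  rw [matchColor, dif_pos (freeColors_nonempty hσ)]
  exact min'_mem _ _

def specialVertex (n : Fin (d + 1) → ℕ) [∀ i, NeZero (n i)] (i : Fin (d + 1)) : Vertex n :=
  ⟨i, 0⟩

lemma specialVertex_injective : Function.Injective (specialVertex n) :=
  fun _ _ h => congrArg Sigma.fst h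

lemma eq_specialVertex {w : Vertex n} (hw : (w.2 : ℕ) = 0) : w = specialVertex n w.1 := by
  obtain ⟨i, a⟩ := w
  rw [specialVertex, show a = 0 from Fin.ext hw]

def matchVertex (σ : Finset (Vertex n)) : Vertex n := specialVertex n (matchColor σ)

lemma matchVertex_special (σ : Finset (Vertex n)) : ((matchVertex σ).2 : ℕ) = 0 := rfl

lemma matchVertex_insert {σ : Finset (Vertex n)} {w : Vertex n} (hw : (w.2 : ℕ) = 0) :
    matchVertex (insert w σ) = matchVertex σ := by
  simp only [matchVertex, matchColor_insert hw]

lemma matchVertex_erase {σ : Finset (Vertex n)} {w : Vertex n} (hw : (w.2 : ℕ) = 0) :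
    matchVertex (σ.erase w) = matchVertex σ := by
  simp only [matchVertex, matchColor_erase hw]

lemma eq_matchVertex_of_mem {σ : Finset (Vertex n)} (hσ : σ ∈ exampleAvoiding d n)
    {v : Vertex n} (hv : v ∈ σ) (hcolor : v.1 = (matchVertex σ).1) : v = matchVertex σ := by
  rw [eq_specialVertex (mem_freeColors.mp (matchColor_mem_freeColors hσ) v hv hcolor)]
  exact congrArg (specialVertex n) hcolor

lemma insert_matchVertex_mem {τ : Finset (Vertex n)} (hτ : τ ∈ exampleAvoiding d n)
    (hns : ∃ v ∈ τ, (v.2 : ℕ) ≠ 0) : insert (matchVertex τ) τ ∈ exampleAvoiding d n := by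
  obtain ⟨v, hv, hvns⟩ := hns
  have hcol := (mem_exampleAvoiding.mp hτ).1
  refine mem_exampleAvoiding.mpr ⟨fun x hx y hy hxy => ?_, fun h => ?_⟩
  · rcases mem_insert.mp hx with rfl | hx <;> rcases mem_insert.mp hy with rfl | hy
    · rfl
    · exact (eq_matchVertex_of_mem hτ hy hxy.symm).symm
    · exact eq_matchVertex_of_mem hτ hx hxy
    · exact hcol x hx y hy hxy
  · rcases h.2 with hall | hall
    · exact hvns (hall v (mem_insert_of_mem hv))
    · exact hall _ (mem_insert_self _ _) (matchVertex_special τ)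

noncomputable def matchingBottoms (d : ℕ) (n : Fin (d + 1) → ℕ) [∀ i, NeZero (n i)] :
    Finset (Finset (Vertex n)) :=
  (exampleAvoiding d n).filter fun τ => (∃ v ∈ τ, (v.2 : ℕ) ≠ 0) ∧ matchVertex τ ∉ τ

/-- The all-special faces together with the matched pairs whose smaller face lies in `P`. -/
noncomputable def pairedComplex (P : Finset (Finset (Vertex n))) : Finset (Finset (Vertex n)) :=
  (exampleAvoiding d n).filter fun γ => (∀ v ∈ γ, (v.2 : ℕ) = 0) ∨ γ.erase (matchVertex γ) ∈ P

lemma pairedComplex_empty :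
    pairedComplex (∅ : Finset (Finset (Vertex n))) = specialBoundary d n := by
  ext γ
  simp only [pairedComplex, mem_filter, notMem_empty, or_false]
  exact ⟨fun ⟨hγ, hsp⟩ => (mem_specialBoundary_iff_of_mem_exampleAvoiding hγ).mpr hsp,
    fun hγ => ⟨specialBoundary_subset_exampleAvoiding hγ, (mem_specialBoundary.mp hγ).2.2⟩⟩

lemma pairedComplex_matchingBottoms :
    pairedComplex (matchingBottoms d n) = exampleAvoiding d n := by
  ext γ
  simp only [pairedComplex, mem_filter, and_iff_left_iff_imp]
  intro hγ
  by_cases hsp : ∀ v ∈ γ, (v.2 : ℕ) = 0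
  · exact Or.inl hsp
  obtain ⟨v, hv, hvns⟩ : ∃ v ∈ γ, (v.2 : ℕ) ≠ 0 := by simpa using hsp
  have hvm : v ≠ matchVertex γ := fun h => hvns (h ▸ matchVertex_special γ)
  refine Or.inr (mem_filter.mpr ⟨isLowerSet_exampleAvoiding (erase_subset _ _) hγ,
    ⟨v, mem_erase.mpr ⟨hvm, hv⟩, hvns⟩, ?_⟩)
  rw [matchVertex_erase (matchVertex_special γ)]
  exact notMem_erase _ _

def collapseKey (γ : Finset (Vertex n)) : ℕ ×ₗ ℕ :=
  toLex (#(insert (matchVertex γ) γ), #(γ.filter fun v => (v.2 : ℕ) ≠ 0))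

lemma collapseKey_erase_matchVertex (γ : Finset (Vertex n)) :
    collapseKey (γ.erase (matchVertex γ)) = collapseKey γ := by
  by_cases hγ : matchVertex γ ∈ γ
  · rw [collapseKey, collapseKey, matchVertex_erase (matchVertex_special γ), insert_erase hγ,
      insert_eq_of_mem hγ, filter_erase, erase_eq_of_notMem]
    exact fun h => (mem_filter.mp h).2 (matchVertex_special γ)
  · rw [erase_eq_of_notMem hγ]

lemma collapseKey_lt {τ γ : Finset (Vertex n)} (hτ : matchVertex τ ∉ τ) (hτγ : τ ⊆ γ)
    (hγ : ¬ γ ⊆ insert (matchVertex τ) τ) : collapseKey τ < collapseKey γ := by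
  obtain ⟨w, hwγ, hw⟩ := not_subset.mp hγ
  rw [mem_insert, not_or] at hw
  have hwτγ : insert w τ ⊆ γ := insert_subset hwγ hτγ
  have htop : #(insert (matchVertex τ) τ) = #τ + 1 := card_insert_of_notMem hτ
  have hγtop : #γ ≤ #(insert (matchVertex γ) γ) := card_le_card (subset_insert _ _)
  have hwcard : #(insert w τ) ≤ #γ := card_le_card hwτγ
  rw [card_insert_of_notMem hw.2] at hwcard
  rw [collapseKey, collapseKey, Prod.Lex.toLex_lt_toLex]
  by_cases hws : (w.2 : ℕ) = 0
  · refine Or.inl ?_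
    rcases hwcard.lt_or_eq with hlt | heq
    · omega
    · obtain rfl : γ = insert w τ :=
        (eq_of_subset_of_card_le hwτγ (by rw [card_insert_of_notMem hw.2]; omega)).symm
      have hnew : #(insert (matchVertex τ) (insert w τ)) = #(insert w τ) + 1 :=
        card_insert_of_notMem (by simp [Ne.symm hw.1, hτ])
      rw [matchVertex_insert hws, hnew, card_insert_of_notMem hw.2]
      omega
  · have hns : #(τ.filter fun v => (v.2 : ℕ) ≠ 0) < #(γ.filter fun v => (v.2 : ℕ) ≠ 0) := by
      refine card_lt_card ((ssubset_iff_of_subset (filter_subset_filter _ hτγ)).mpr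
        ⟨w, mem_filter.mpr ⟨hwγ, hws⟩, fun h => hw.2 (mem_filter.mp h).1⟩)
    omega

lemma erase_matchVertex_eq_of_subset {τ γ : Finset (Vertex n)} (hτ : matchVertex τ ∉ τ)
    (hτγ : τ ⊆ γ) (hγτ : γ ⊆ insert (matchVertex τ) τ) : γ.erase (matchVertex γ) = τ := by
  by_cases hm : matchVertex τ ∈ γ
  · obtain rfl : γ = insert (matchVertex τ) τ := subset_antisymm hγτ (insert_subset hm hτγ)
    rw [matchVertex_insert (matchVertex_special τ), erase_insert hτ]
  · obtain rfl : γ = τ := subset_antisymm ((subset_insert_iff_of_notMem hm).mp hγτ) hτγ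
    exact erase_eq_of_notMem hτ

section Step

variable {P : Finset (Finset (Vertex n))} {τ : Finset (Vertex n)}
  (hP : P ⊆ matchingBottoms d n) (hτP : τ ∈ P) (hmax : ∀ τ' ∈ P, collapseKey τ' ≤ collapseKey τ)
include hP hτP hmax

lemma subset_insert_matchVertex_of_mem_pairedComplex {γ : Finset (Vertex n)}
    (hγ : γ ∈ pairedComplex P) (hτγ : τ ⊆ γ) : γ ⊆ insert (matchVertex τ) τ := by
  obtain ⟨-, ⟨v, hv, hvns⟩, hmv⟩ := mem_filter.mp (hP hτP)
  have hbot : γ.erase (matchVertex γ) ∈ P :=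
    (mem_filter.mp hγ).2.resolve_left fun hsp => hvns (hsp v (hτγ hv))
  by_contra hsub
  exact (hmax _ hbot).not_gt (collapseKey_erase_matchVertex γ ▸ collapseKey_lt hmv hτγ hsub)

lemma collapseStep_pairedComplex_erase :
    CollapseStep (pairedComplex P) (pairedComplex (P.erase τ)) := by
  obtain ⟨hτAv, ⟨v, hv, hvns⟩, hmv⟩ := mem_filter.mp (hP hτP)
  have hfree := fun γ => subset_insert_matchVertex_of_mem_pairedComplex hP hτP hmax (γ := γ)
  refine ⟨τ, insert (matchVertex τ) τ, mem_filter.mpr ⟨hτAv, Or.inr ?_⟩,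
    mem_filter.mpr ⟨insert_matchVertex_mem hτAv ⟨v, hv, hvns⟩, Or.inr ?_⟩,
    ssubset_insert hmv, hfree, ?_⟩
  · rwa [erase_eq_of_notMem hmv]
  · rwa [erase_matchVertex_eq_of_subset hmv (subset_insert _ _) subset_rfl]
  ext γ
  simp only [pairedComplex, mem_filter, mem_erase]
  constructor
  · rintro ⟨hγ, hsp | ⟨hne, hbot⟩⟩
    · exact ⟨⟨hγ, Or.inl hsp⟩, fun h => hvns (hsp v (h hv))⟩
    · refine ⟨⟨hγ, Or.inr hbot⟩, fun h => hne ?_⟩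
      exact erase_matchVertex_eq_of_subset hmv h (hfree γ (mem_filter.mpr ⟨hγ, Or.inr hbot⟩) h)
  · rintro ⟨⟨hγ, hsp | hbot⟩, hτγ⟩
    · exact ⟨hγ, Or.inl hsp⟩
    · exact ⟨hγ, Or.inr ⟨fun h => hτγ (h ▸ erase_subset _ _), hbot⟩⟩

end Step

lemma reflTransGen_collapseStep_pairedComplex (P : Finset (Finset (Vertex n)))
    (hP : P ⊆ matchingBottoms d n) :
    Relation.ReflTransGen CollapseStep (pairedComplex P) (specialBoundary d n) := by
  induction P using Finset.strongInduction with
  | H P ih =>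
    rcases P.eq_empty_or_nonempty with rfl | hne
    · rw [pairedComplex_empty]
    obtain ⟨τ, hτP, hmax⟩ := exists_max_image P collapseKey hne
    exact .head (collapseStep_pairedComplex_erase hP hτP hmax)
      (ih _ (erase_ssubset hτP) ((erase_subset _ _).trans hP))

theorem reflTransGen_collapseStep_exampleAvoiding :
    Relation.ReflTransGen CollapseStep (exampleAvoiding d n) (specialBoundary d n) :=
  pairedComplex_matchingBottoms (d := d) (n := n) ▸
    reflTransGen_collapseStep_pairedComplex _ subset_rfl

section Realization

lemma isLowerSet_specialBoundary :
    IsLowerSet (specialBoundary d n : Set (Finset (Vertex n))) := by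
  intro σ ρ hρσ hσ
  rw [mem_coe, mem_specialBoundary] at hσ ⊢
  exact ⟨hσ.1.subset hρσ, (card_le_card hρσ).trans hσ.2.1, fun v hv => hσ.2.2 v (hρσ hv)⟩

lemma sum_eq_sum_specialVertex {f : Vertex n → ℝ} (hf : ∀ w : Vertex n, (w.2 : ℕ) ≠ 0 → f w = 0) :
    ∑ w, f w = ∑ i, f (specialVertex n i) := by
  rw [Fintype.sum_sigma]
  exact sum_congr rfl fun i _ => Fintype.sum_eq_single 0 fun j hj =>
    hf ⟨i, j⟩ (Fin.val_ne_zero_iff.mpr hj)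

lemma exists_specialVertex_notMem {ρ : Finset (Vertex n)} (hρ : ρ ∈ specialBoundary d n) :
    ∃ i, specialVertex n i ∉ ρ := by
  by_contra! hall
  have hsub : univ.image (specialVertex n) ⊆ ρ := fun w hw => by
    obtain ⟨i, -, rfl⟩ := mem_image.mp hw
    exact hall i
  have := card_le_card hsub
  rw [card_image_of_injective _ specialVertex_injective, card_univ, Fintype.card_fin] at this
  have := (mem_specialBoundary.mp hρ).2.1
  omega

lemma image_specialVertex_mem_specialBoundary (i : Fin (d + 1)) :
    (univ.erase i).image (specialVertex n) ∈ specialBoundary d n := by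
  refine mem_specialBoundary.mpr ⟨fun v hv w hw hvw => ?_, card_image_le.trans (by simp),
    fun v hv => ?_⟩
  · obtain ⟨j, -, rfl⟩ := mem_image.mp hv
    obtain ⟨k, -, rfl⟩ := mem_image.mp hw
    rw [show j = k from hvw]
  · obtain ⟨j, -, rfl⟩ := mem_image.mp hv
    rfl

lemma mem_realization_specialBoundary {f : Vertex n → ℝ} :
    f ∈ realization (· ∈ specialBoundary d n) ↔ f ∈ stdSimplex ℝ _ ∧
      (∀ w : Vertex n, (w.2 : ℕ) ≠ 0 → f w = 0) ∧ ∃ i, f (specialVertex n i) = 0 := by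
  rw [mem_realization_iff_of_isLowerSet isLowerSet_specialBoundary]
  refine and_congr_right fun _ => ⟨fun ⟨ρ, hρ, hvan⟩ => ?_, fun ⟨hns, i, hi⟩ => ?_⟩
  · obtain ⟨i, hi⟩ := exists_specialVertex_notMem hρ
    exact ⟨fun w hw => hvan w fun hwρ => hw ((mem_specialBoundary.mp hρ).2.2 w hwρ),
      i, hvan _ hi⟩
  refine ⟨_, image_specialVertex_mem_specialBoundary i, fun w hwρ => ?_⟩
  by_cases hw : (w.2 : ℕ) = 0
  · obtain rfl : w.1 = i := by
      by_contra hne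
      exact hwρ (mem_image.mpr ⟨w.1, mem_erase.mpr ⟨hne, mem_univ _⟩, (eq_specialVertex hw).symm⟩)
    rwa [eq_specialVertex hw]
  · exact hns w hw

def extendSpecial (n : Fin (d + 1) → ℕ) (g : Fin (d + 1) → ℝ) : Vertex n → ℝ :=
  fun w => if (w.2 : ℕ) = 0 then g w.1 else 0

lemma extendSpecial_specialVertex {g : Fin (d + 1) → ℝ} {i : Fin (d + 1)} :
    extendSpecial n g (specialVertex n i) = g i :=
  if_pos rfl

lemma comp_specialVertex_mem_simplexBoundary {f : Vertex n → ℝ}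
    (hf : f ∈ realization (· ∈ specialBoundary d n)) :
    (fun i => f (specialVertex n i)) ∈ simplexBoundary (Fin (d + 1)) := by
  obtain ⟨⟨hf0, hf1⟩, hns, hzero⟩ := mem_realization_specialBoundary.mp hf
  exact ⟨⟨fun i => hf0 _, (sum_eq_sum_specialVertex hns).symm.trans hf1⟩, hzero⟩

lemma extendSpecial_mem_realization {g : Fin (d + 1) → ℝ}
    (hg : g ∈ simplexBoundary (Fin (d + 1))) :
    extendSpecial n g ∈ realization (· ∈ specialBoundary d n) := by
  obtain ⟨⟨hg0, hg1⟩, i, hi⟩ := hg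
  have hns : ∀ w : Vertex n, (w.2 : ℕ) ≠ 0 → extendSpecial n g w = 0 :=
    fun _ hw => if_neg hw
  refine mem_realization_specialBoundary.mpr
    ⟨⟨fun w => ?_, ?_⟩, hns, i, by rw [extendSpecial_specialVertex, hi]⟩
  · unfold extendSpecial
    split_ifs
    exacts [hg0 _, le_rfl]
  · rw [sum_eq_sum_specialVertex hns]
    simpa only [extendSpecial_specialVertex] using hg1

def realizationSpecialBoundaryHomeomorph (d : ℕ) (n : Fin (d + 1) → ℕ) [∀ i, NeZero (n i)] :
    realization (· ∈ specialBoundary d n) ≃ₜ simplexBoundary (Fin (d + 1)) where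
  toFun f := ⟨fun i => f.1 (specialVertex n i), comp_specialVertex_mem_simplexBoundary f.2⟩
  invFun g := ⟨extendSpecial n g.1, extendSpecial_mem_realization g.2⟩
  left_inv f := Subtype.ext <| funext fun w => by
    change extendSpecial n (fun i => f.1 (specialVertex n i)) w = f.1 w
    by_cases hw : (w.2 : ℕ) = 0
    · rw [eq_specialVertex hw]
      exact extendSpecial_specialVertex
    · rw [extendSpecial, if_neg hw, (mem_realization_specialBoundary.mp f.2).2.1 w hw]
  right_inv g := Subtype.ext <| funext fun _ => extendSpecial_specialVertex (n := n)
  continuous_toFun := by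
    refine (continuous_pi fun i => ?_).subtype_mk _
    exact (continuous_apply _).comp continuous_subtype_val
  continuous_invFun := by
    refine (continuous_pi fun w => ?_).subtype_mk _
    by_cases hw : (w.2 : ℕ) = 0
    · simp only [extendSpecial, if_pos hw]
      exact (continuous_apply _).comp continuous_subtype_val
    · simp only [extendSpecial, if_neg hw]
      exact continuous_const

end Realization

end Example

theorem example_avoiding_collapses_general (d : ℕ) (n : Fin (d + 1) → ℕ)
    [∀ i, NeZero (n i)] :
    Relation.ReflTransGen CollapseStep (exampleAvoiding d n) (specialBoundary d n) ∧
    Nonempty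
      (ContinuousMap.HomotopyEquiv
        (realization (fun σ => σ ∈ exampleAvoiding d n))
        (Metric.sphere (0 : EuclideanSpace ℝ (Fin d)) 1)) := by
  have hcollapse := reflTransGen_collapseStep_exampleAvoiding (d := d) (n := n)
  obtain ⟨e⟩ := nonempty_homotopyEquiv_of_reflTransGen_collapseStep hcollapse
    isLowerSet_exampleAvoiding ⟨∅, by simp [mem_specialBoundary, IsColorful]⟩
  obtain ⟨h⟩ := nonempty_homeomorph_simplexBoundary_sphere d
  exact ⟨hcollapse, ⟨e.trans ((realizationSpecialBoundaryHomeomorph d n).trans h).toHomotopyEquiv⟩⟩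

/-- **Collapsibility of the example's avoiding complex.** The avoiding complex of
the extremal example collapses onto the boundary of the special simplex
`{a^0, …, a^d}`; in particular it is homotopy equivalent to the sphere `S^{d-1}`. -/
theorem example_avoiding_collapses (d : ℕ) (n : Fin (d + 1) → ℕ) (hn : ∀ i, 2 ≤ n i)
    [∀ i, NeZero (n i)] :
    Relation.ReflTransGen CollapseStep (exampleAvoiding d n) (specialBoundary d n) ∧
    Nonempty
      (ContinuousMap.HomotopyEquiv
        (realization (fun σ => σ ∈ exampleAvoiding d n))
        (Metric.sphere (0 : EuclideanSpace ℝ (Fin d)) 1)) :=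
  example_avoiding_collapses_general d n
end
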